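/- arXiv:1011.1980 — 6 statements merged into one kernel-verified Lean document; each statement's English description precedes it below -/
import Mathlib

section
/- Let S be a finite set, let P be an irreducible stochastic matrix on S (all entries nonnegative, every row summing to 1), and let π be a probability distribution on S with π_s > 0 for all s, such that P is in detailed balance with π (π_s P_{ss'} = π_{s'} P_{s's} for all s,s' ∈ S). Let X be a nonempty subset of S, and for s,s' ∈ X define the 'watched-chain' matrix (P̄)_{ss'} := P_{ss'} + Σ_{n=0}^∞ Σ_{s_0,s_1,…,s_n ∈ S∖X} P_{s s_0} (Π_{l=1}^n P_{s_{l-1} s_l}) P_{s_n s'}. Then every such series converges, P̄ is a stochastic matrix on X, and P̄ is in detailed balance with the normalized restriction π̄_s = π_s / Σ_{t∈X} π_t, i.e. π̄_s (P̄)_{ss'} = π̄_{s'} (P̄)_{s's} for all s,s' ∈ X. -/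
/-!
Let `Q = P · diag(𝟙_{Xᶜ})` be the chain killed on entering `X`; the `n`-th term of the series
is `(Qⁿ⁺¹ P) s s'`. As `P` is stochastic, `(P 𝟙_X)_s = 1 - (Q 𝟙)_s`, so the mass that the
`n`-th term puts on `X` telescopes to `(Qⁿ⁺¹ 𝟙)_s - (Qⁿ⁺² 𝟙)_s`, and the row sums of `P̄` equal
`1 - lim_k (Qᵏ 𝟙)_s`. Irreducibility lets every state reach a point of `X`, so some power
satisfies `Qᴺ 𝟙 ≤ θ 𝟙` with `θ < 1` and the survival probabilities `Qᵏ 𝟙` decay to `0`.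
Detailed balance passes to every term because `diag(π) (P D)ᵏ P` is symmetric whenever
`diag(π) P` is, for a diagonal `D`.
-/

open Finset

/-- The sum over all `(n+1)`-tuples of states lying in `Y` of the product of transition
probabilities along the corresponding path `s → s₀ → s₁ → ⋯ → sₙ → s'`. -/
noncomputable def tupSum {S : Type*} [Fintype S] [DecidableEq S]
    (P : Matrix S S ℝ) (Y : Finset S) (s s' : S) (n : ℕ) : ℝ :=
  ∑ f : Fin (n + 1) → S,
    if ∀ i, f i ∈ Y then
      P s (f 0) * (∏ i : Fin n, P (f i.castSucc) (f i.succ)) * P (f (Fin.last n)) s'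
    else 0

/-- The watched-chain ("observed only on `X`") transition kernel
`P̄ s s' = P s s' + ∑_{n=0}^∞ ∑_{s₀,…,sₙ ∈ S∖X} P s s₀ (∏ P s_{l-1} s_l) P sₙ s'`. -/
noncomputable def watched {S : Type*} [Fintype S] [DecidableEq S]
    (P : Matrix S S ℝ) (X : Finset S) (s s' : S) : ℝ :=
  P s s' + ∑' n : ℕ, tupSum P Xᶜ s s' n

open Matrix Filter Topology

namespace Matrix

variable {n R : Type*} [Fintype n]

theorem sum_path_eq_pow_mul [DecidableEq n] [CommSemiring R] (M B : Matrix n n R) (k : ℕ)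
    (s t : n) :
    ∑ f : Fin (k + 1) → n,
      M s (f 0) * (∏ i : Fin k, M (f i.castSucc) (f i.succ)) * B (f (Fin.last k)) t =
    (M ^ (k + 1) * B) s t := by
  induction k generalizing s with
  | zero =>
    rw [pow_one, mul_apply, ← (Equiv.funUnique (Fin 1) n).symm.sum_comp]
    simp
  | succ k ih =>
    rw [pow_succ', Matrix.mul_assoc, mul_apply, ← (Fin.consEquiv fun _ => n).sum_comp,
      Fintype.sum_prod_type]
    refine sum_congr rfl fun y _ => ?_
    rw [← ih, mul_sum]
    refine sum_congr rfl fun g _ => ?_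
    simp [Fin.prod_univ_succ, mul_assoc]

theorem pow_apply_le_pow_apply [DecidableEq n] [Semiring R] [PartialOrder R] [IsOrderedRing R]
    {A B : Matrix n n R} (hA : ∀ i j, 0 ≤ A i j) (hAB : ∀ i j, A i j ≤ B i j) (k : ℕ) :
    ∀ i j, (A ^ k) i j ≤ (B ^ k) i j := by
  induction k with
  | zero => simp
  | succ k ih =>
    intro i j
    rw [pow_succ, pow_succ, mul_apply, mul_apply]
    exact sum_le_sum fun l _ => mul_le_mul (ih i l) (hAB l j) (hA l j)
      ((pow_apply_nonneg hA k i l).trans (ih i l))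

theorem mulVec_one_apply {m : Type*} [NonAssocSemiring R] (A : Matrix m n R) (i : m) :
    (A *ᵥ 1) i = ∑ j, A i j := by
  simp [mulVec, dotProduct]

theorem mulVec_mono_of_nonneg [Semiring R] [PartialOrder R] [IsOrderedRing R]
    {A : Matrix n n R} (hA : ∀ i j, 0 ≤ A i j) {v w : n → R} (hvw : v ≤ w) :
    A *ᵥ v ≤ A *ᵥ w := fun i =>
  sum_le_sum fun j _ => mul_le_mul_of_nonneg_left (hvw j) (hA i j)

theorem IsSymm.mul_pow_mul [DecidableEq n] [CommSemiring R] {W P D : Matrix n n R} (hW : W.IsSymm)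
    (hD : D.IsSymm) (hWD : Commute W D) (hWP : (W * P).IsSymm) (k : ℕ) :
    (W * ((P * D) ^ k * P)).IsSymm := by
  have hPW : Pᵀ * W = W * P := by simpa [IsSymm, hW.eq] using hWP
  have hW_DP : SemiconjBy W (D * P) (D * Pᵀ) := by
    rw [SemiconjBy, ← Matrix.mul_assoc, hWD.eq, Matrix.mul_assoc, ← hPW, Matrix.mul_assoc]
  have hP_DP : SemiconjBy P (D * P) (P * D) := (Matrix.mul_assoc _ _ _).symm
  unfold IsSymm
  rw [transpose_mul, transpose_mul, transpose_pow, transpose_mul, hD.eq, hW.eq,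
    Matrix.mul_assoc, ← (hW_DP.pow_right k).eq, ← Matrix.mul_assoc, hPW, Matrix.mul_assoc,
    (hP_DP.pow_right k).eq]

end Matrix

section Substochastic

variable {n : Type*} [Fintype n] [DecidableEq n] {Q : Matrix n n ℝ}

theorem pow_mulVec_one_le_pow (hQ : ∀ i j, 0 ≤ Q i j) {θ : ℝ} (hθ : 0 ≤ θ)
    (hQθ : Q *ᵥ 1 ≤ θ • 1) (k : ℕ) : Q ^ k *ᵥ 1 ≤ θ ^ k • 1 := by
  induction k with
  | zero => simp
  | succ k ih =>
    calc Q ^ (k + 1) *ᵥ 1 = Q ^ k *ᵥ (Q *ᵥ 1) := by rw [pow_succ, mulVec_mulVec]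
      _ ≤ Q ^ k *ᵥ (θ • 1) := mulVec_mono_of_nonneg (pow_apply_nonneg hQ k) hQθ
      _ = θ • (Q ^ k *ᵥ 1) := mulVec_smul _ _ _
      _ ≤ θ • (θ ^ k • 1) := smul_le_smul_of_nonneg_left ih hθ
      _ = θ ^ (k + 1) • 1 := by rw [smul_smul, pow_succ']

theorem antitone_pow_mulVec_one (hQ : ∀ i j, 0 ≤ Q i j) (hQ1 : Q *ᵥ 1 ≤ 1) :
    Antitone fun k => Q ^ k *ᵥ 1 :=
  antitone_nat_of_succ_le fun k => by
    rw [pow_succ, ← mulVec_mulVec]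
    exact mulVec_mono_of_nonneg (pow_apply_nonneg hQ k) hQ1

theorem tendsto_pow_mulVec_one_apply (hQ : ∀ i j, 0 ≤ Q i j) (hQ1 : Q *ᵥ 1 ≤ 1)
    (hexit : ∀ i, ∃ k, (Q ^ k *ᵥ 1) i < 1) (i : n) :
    Tendsto (fun k => (Q ^ k *ᵥ 1) i) atTop (𝓝 0) := by
  have hanti := antitone_pow_mulVec_one hQ hQ1
  have hnonneg (k : ℕ) : 0 ≤ Q ^ k *ᵥ 1 := by
    simpa using mulVec_mono_of_nonneg (pow_apply_nonneg hQ k) (zero_le_one : (0 : n → ℝ) ≤ 1)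
  choose K hK using hexit
  set N := univ.sup K
  have hN (j : n) : (Q ^ N *ᵥ 1) j < 1 := (hanti (le_sup (mem_univ j)) j).trans_lt (hK j)
  have : Nonempty n := ⟨i⟩
  obtain ⟨j₀, hj₀⟩ := Finite.exists_max fun j => (Q ^ N *ᵥ 1) j
  have hgeo (k : ℕ) : (Q ^ (N * k) *ᵥ 1) i ≤ (Q ^ N *ᵥ 1) j₀ ^ k := by
    rw [pow_mul]
    simpa using pow_mulVec_one_le_pow (pow_apply_nonneg hQ N) (hnonneg N j₀)
      (fun j => by simpa using hj₀ j) k i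
  refine tendsto_order.2 ⟨fun a ha => .of_forall fun k => ha.trans_le (hnonneg k i),
    fun ε hε => ?_⟩
  obtain ⟨k, hk⟩ := exists_pow_lt_of_lt_one hε (hN j₀)
  exact eventually_atTop.2 ⟨N * k, fun m hm => ((hanti hm i).trans (hgeo k)).trans_lt hk⟩

end Substochastic

section Killed

variable {S : Type*} [Fintype S] [DecidableEq S] {P : Matrix S S ℝ} {Y : Finset S}

noncomputable def killedOutside (P : Matrix S S ℝ) (Y : Finset S) : Matrix S S ℝ :=
  P * diagonal fun j => if j ∈ Y then 1 else 0

theorem killedOutside_apply (P : Matrix S S ℝ) (Y : Finset S) (a b : S) :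
    killedOutside P Y a b = if b ∈ Y then P a b else 0 := by
  simp [killedOutside]

theorem killedOutside_nonneg (hP : ∀ i j, 0 ≤ P i j) (i j : S) : 0 ≤ killedOutside P Y i j := by
  rw [killedOutside_apply]
  split_ifs
  exacts [hP i j, le_rfl]

theorem killedOutside_le (hP : ∀ i j, 0 ≤ P i j) (i j : S) : killedOutside P Y i j ≤ P i j := by
  rw [killedOutside_apply]
  split_ifs
  exacts [le_rfl, hP i j]

theorem tupSum_eq_killedOutside_pow_mul (P : Matrix S S ℝ) (Y : Finset S) (s s' : S) (n : ℕ) :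
    tupSum P Y s s' n = (killedOutside P Y ^ (n + 1) * P) s s' := by
  rw [← sum_path_eq_pow_mul, tupSum]
  refine sum_congr rfl fun f _ => ?_
  split_ifs with h
  · simp [killedOutside_apply, h]
  · obtain ⟨i, hi⟩ := not_forall.1 h
    cases i using Fin.cases with
    | zero => simp [killedOutside_apply, hi]
    | succ j =>
      rw [prod_eq_zero (mem_univ j) (by simp [killedOutside_apply, hi]), mul_zero, zero_mul]

theorem tupSum_nonneg (hP : ∀ i j, 0 ≤ P i j) (s s' : S) (n : ℕ) : 0 ≤ tupSum P Y s s' n :=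
  sum_nonneg fun _ _ => by
    split_ifs
    exacts [mul_nonneg (mul_nonneg (hP _ _) (prod_nonneg fun _ _ => hP _ _)) (hP _ _), le_rfl]

theorem sum_compl_killedOutside_pow_mul_apply (hP : P ∈ rowStochastic ℝ S) (k : ℕ) (s : S) :
    ∑ j ∈ Yᶜ, (killedOutside P Y ^ k * P) s j =
      (killedOutside P Y ^ k *ᵥ 1) s - (killedOutside P Y ^ (k + 1) *ᵥ 1) s := by
  have hall : (killedOutside P Y ^ k *ᵥ 1) s = ∑ j, (killedOutside P Y ^ k * P) s j := by
    rw [← one_vecMul_of_mem_rowStochastic hP, mulVec_mulVec, mulVec_one_apply]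
  have hY : (killedOutside P Y ^ (k + 1) *ᵥ 1) s = ∑ j ∈ Y, (killedOutside P Y ^ k * P) s j := by
    rw [pow_succ, killedOutside, ← Matrix.mul_assoc, mulVec_one_apply]
    simp [mul_diagonal]
  rw [hall, hY, ← sum_add_sum_compl Y]
  ring

theorem killedOutside_pow_mulVec_one_add_le (hP : P ∈ rowStochastic ℝ S) {x : S} (hx : x ∉ Y)
    {k : ℕ} (hk : 1 ≤ k) (s : S) : (killedOutside P Y ^ k *ᵥ 1) s + (P ^ k) s x ≤ 1 := by
  have hPnn (i j : S) : 0 ≤ P i j := nonneg_of_mem_rowStochastic hP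
  have hx0 : (killedOutside P Y ^ k) s x = 0 := by
    obtain ⟨m, rfl⟩ := Nat.exists_eq_add_of_le' hk
    simp [pow_succ, mul_apply, killedOutside_apply, hx]
  have hle :=
    pow_apply_le_pow_apply (killedOutside_nonneg (Y := Y) hPnn) (killedOutside_le hPnn) k s
  calc (killedOutside P Y ^ k *ᵥ 1) s + (P ^ k) s x
      = ∑ j ∈ univ.erase x, (killedOutside P Y ^ k) s j + (P ^ k) s x := by
        rw [mulVec_one_apply, ← sum_erase_add _ _ (mem_univ x), hx0, add_zero]
    _ ≤ ∑ j ∈ univ.erase x, (P ^ k) s j + (P ^ k) s x := by gcongr with j; exact hle j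
    _ = 1 := by rw [sum_erase_add _ _ (mem_univ x), sum_row_of_mem_rowStochastic (pow_mem hP k)]

theorem killedOutside_mulVec_one_le (hP : P ∈ rowStochastic ℝ S) : killedOutside P Y *ᵥ 1 ≤ 1 :=
  fun i => by
    have := sum_compl_killedOutside_pow_mul_apply (Y := Y) hP 0 i
    have := sum_nonneg fun j (_ : j ∈ Yᶜ) => nonneg_of_mem_rowStochastic hP (i := i) (j := j)
    simp_all

theorem tendsto_killedOutside_pow_mulVec_one (hP : P ∈ rowStochastic ℝ S) {x : S} (hx : x ∉ Y)
    (hreach : ∀ s, ∃ k, 1 ≤ k ∧ 0 < (P ^ k) s x) (s : S) :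
    Tendsto (fun k => (killedOutside P Y ^ k *ᵥ 1) s) atTop (𝓝 0) := by
  have hPnn (i j : S) : 0 ≤ P i j := nonneg_of_mem_rowStochastic hP
  refine tendsto_pow_mulVec_one_apply (killedOutside_nonneg hPnn)
    (killedOutside_mulVec_one_le hP) (fun i => ?_) s
  obtain ⟨k, hk, hpos⟩ := hreach i
  exact ⟨k, by linarith [killedOutside_pow_mulVec_one_add_le hP hx hk i]⟩

end Killed

theorem hasSum_sub_succ_of_antitone {f : ℕ → ℝ} (hf : Antitone f) {l : ℝ}
    (hl : Tendsto f atTop (𝓝 l)) : HasSum (fun n => f n - f (n + 1)) (f 0 - l) := by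
  refine (hasSum_iff_tendsto_nat_of_nonneg (fun n => sub_nonneg.2 (hf n.le_succ)) _).2 ?_
  simp_rw [sum_range_sub']
  exact tendsto_const_nhds.sub hl

section Watched

variable {S : Type*} [Fintype S] [DecidableEq S] {P : Matrix S S ℝ} {X : Finset S}

theorem hasSum_sum_tupSum {s : S} (hP : P ∈ rowStochastic ℝ S)
    (hdecay : Tendsto (fun k => (killedOutside P Xᶜ ^ k *ᵥ 1) s) atTop (𝓝 0)) :
    HasSum (fun n => ∑ s' ∈ X, tupSum P Xᶜ s s' n) ((killedOutside P Xᶜ *ᵥ 1) s) := by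
  have hPnn (i j : S) : 0 ≤ P i j := nonneg_of_mem_rowStochastic hP
  have hanti : Antitone fun k => (killedOutside P Xᶜ ^ (k + 1) *ᵥ 1) s := fun a b hab =>
    antitone_pow_mulVec_one (killedOutside_nonneg hPnn) (killedOutside_mulVec_one_le hP)
      (Nat.succ_le_succ hab) s
  convert hasSum_sub_succ_of_antitone hanti (hdecay.comp (tendsto_add_atTop_nat 1)) using 1
  · funext n
    have h := sum_compl_killedOutside_pow_mul_apply (Y := Xᶜ) hP (n + 1) s
    rw [compl_compl] at h
    simp_rw [tupSum_eq_killedOutside_pow_mul, h]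
  · simp

theorem summable_tupSum {s : S} (hP : P ∈ rowStochastic ℝ S)
    (hdecay : Tendsto (fun k => (killedOutside P Xᶜ ^ k *ᵥ 1) s) atTop (𝓝 0))
    {s' : S} (hs' : s' ∈ X) : Summable (tupSum P Xᶜ s s') :=
  have hPnn (i j : S) : 0 ≤ P i j := nonneg_of_mem_rowStochastic hP
  (hasSum_sum_tupSum hP hdecay).summable.of_nonneg_of_le (fun n => tupSum_nonneg hPnn s s' n)
    fun n => single_le_sum (fun t _ => tupSum_nonneg hPnn s t n) hs'

theorem sum_watched_eq_one {s : S} (hP : P ∈ rowStochastic ℝ S)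
    (hdecay : Tendsto (fun k => (killedOutside P Xᶜ ^ k *ᵥ 1) s) atTop (𝓝 0)) :
    ∑ s' ∈ X, watched P X s s' = 1 := by
  have hstep := sum_compl_killedOutside_pow_mul_apply (Y := Xᶜ) hP 0 s
  rw [compl_compl] at hstep
  simp only [pow_zero, Matrix.one_mul, one_mulVec, zero_add, pow_one, Pi.one_apply] at hstep
  simp only [watched, sum_add_distrib]
  rw [← Summable.tsum_finsetSum fun s' hs' => summable_tupSum hP hdecay hs',
    (hasSum_sum_tupSum hP hdecay).tsum_eq]
  linarith

theorem watched_nonneg (hP : ∀ i j, 0 ≤ P i j) (s s' : S) : 0 ≤ watched P X s s' :=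
  add_nonneg (hP s s') (tsum_nonneg fun n => tupSum_nonneg hP s s' n)

theorem tupSum_detailed_balance {Y : Finset S} {pd : S → ℝ}
    (hdb : ∀ s s', pd s * P s s' = pd s' * P s' s) (s s' : S) (n : ℕ) :
    pd s * tupSum P Y s s' n = pd s' * tupSum P Y s' s n := by
  have hsymm := IsSymm.mul_pow_mul (P := P) (isSymm_diagonal pd)
    (isSymm_diagonal fun j => if j ∈ Y then 1 else 0)
    (commute_diagonal _ _) (IsSymm.ext fun i j => by simp [diagonal_mul, hdb]) (n + 1)
  simpa [tupSum_eq_killedOutside_pow_mul, killedOutside, diagonal_mul] using hsymm.apply s' s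

theorem watched_detailed_balance {pd : S → ℝ} (hdb : ∀ s s', pd s * P s s' = pd s' * P s' s)
    (s s' : S) : pd s * watched P X s s' = pd s' * watched P X s' s := by
  rw [watched, watched, mul_add, mul_add, hdb, ← tsum_mul_left, ← tsum_mul_left]
  congr 1
  exact tsum_congr fun n => tupSum_detailed_balance hdb s s' n

end Watched

theorem watched_chain_stochastic_and_detailed_balance_general
    {S : Type*} [Fintype S] [DecidableEq S]
    (P : Matrix S S ℝ) (pd : S → ℝ)
    (hPnn : ∀ s s', 0 ≤ P s s')
    (hProw : ∀ s, ∑ s', P s s' = 1)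
    (hirr : ∀ s s', ∃ n : ℕ, 1 ≤ n ∧ 0 < (P ^ n) s s')
    (hdb : ∀ s s', pd s * P s s' = pd s' * P s' s)
    (X : Finset S) (hX : X.Nonempty) :
    (∀ s ∈ X, ∀ s' ∈ X, Summable fun n => tupSum P Xᶜ s s' n) ∧
    (∀ s ∈ X, ∀ s' ∈ X, 0 ≤ watched P X s s') ∧
    (∀ s ∈ X, ∑ s' ∈ X, watched P X s s' = 1) ∧
    (∀ s ∈ X, ∀ s' ∈ X,
      (pd s / ∑ t ∈ X, pd t) * watched P X s s' =
        (pd s' / ∑ t ∈ X, pd t) * watched P X s' s) := by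
  have hP : P ∈ rowStochastic ℝ S := mem_rowStochastic_iff_sum.2 ⟨hPnn, hProw⟩
  obtain ⟨x, hx⟩ := hX
  have hdecay (s : S) := tendsto_killedOutside_pow_mulVec_one hP (notMem_compl.2 hx)
    (fun s => hirr s x) s
  refine ⟨fun s _ s' hs' => summable_tupSum hP (hdecay s) hs',
    fun s _ s' _ => watched_nonneg hPnn s s', fun s _ => sum_watched_eq_one hP (hdecay s),
    fun s _ s' _ => ?_⟩
  rw [div_mul_eq_mul_div, div_mul_eq_mul_div, watched_detailed_balance hdb]

theorem watched_chain_stochastic_and_detailed_balance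
    {S : Type*} [Fintype S] [DecidableEq S]
    (P : Matrix S S ℝ) (pd : S → ℝ)
    (hPnn : ∀ s s', 0 ≤ P s s')
    (hProw : ∀ s, ∑ s', P s s' = 1)
    (hirr : ∀ s s', ∃ n : ℕ, 1 ≤ n ∧ 0 < (P ^ n) s s')
    (hpos : ∀ s, 0 < pd s)
    (hsum : ∑ s, pd s = 1)
    (hdb : ∀ s s', pd s * P s s' = pd s' * P s' s)
    (X : Finset S) (hX : X.Nonempty) :
    (∀ s ∈ X, ∀ s' ∈ X, Summable fun n => tupSum P Xᶜ s s' n) ∧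
    (∀ s ∈ X, ∀ s' ∈ X, 0 ≤ watched P X s s') ∧
    (∀ s ∈ X, ∑ s' ∈ X, watched P X s s' = 1) ∧
    (∀ s ∈ X, ∀ s' ∈ X,
      (pd s / ∑ t ∈ X, pd t) * watched P X s s' =
        (pd s' / ∑ t ∈ X, pd t) * watched P X s' s) :=
  watched_chain_stochastic_and_detailed_balance_general P pd hPnn hProw hirr hdb X hX
end

section
/- Let S be a finite set, let P be a stochastic matrix on S in detailed balance with a probability distribution π on S, and let X ⊆ S be such that P_{ss} < 1 for every s ∈ S∖X. Define P' by: (P')_{ss'} = P_{ss'} if s ∈ X; (P')_{ss'} = P_{ss'}/(1 − P_{ss}) if s ∈ S∖X and s' ≠ s; and (P')_{ss} = 0 if s ∈ S∖X. Then P' is a stochastic matrix, and P' is in detailed balance with the (unnormalized) measure π' given by π'_s = π_s for s ∈ X and π'_s = (1 − P_{ss}) π_s for s ∈ S∖X; that is, π'_s (P')_{ss'} = π'_{s'} (P')_{s's} for all s,s' ∈ S. -/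
open Finset

/-- The rejection-free modification of `P` outside `X`: identity transitions from states of
`S ∖ X` are forbidden and the remaining transition probabilities are rescaled. -/
noncomputable def rejFree {S : Type*} [Fintype S] [DecidableEq S]
    (P : Matrix S S ℝ) (X : Finset S) : Matrix S S ℝ :=
  Matrix.of fun s s' =>
    if s ∈ X then P s s'
    else if s' = s then 0 else P s s' / (1 - P s s)

/-!
Off the diagonal, a row `s ∉ X` of the rejection-free matrix is the row of `P` divided by the
escape probability `1 - P s s`, and it vanishes on the diagonal. Hence its sum is
`(1 - P s s) / (1 - P s s) = 1`, and multiplying the weight `π s` by `1 - P s s` exactly undoes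
the rescaling: `π' s * P' s s' = π s * P s s'` for `s ≠ s'`, so detailed balance of `P'`
with `π'` is detailed balance of `P` with `π`.
-/

section RejectionFree

variable {S : Type*} [Fintype S] [DecidableEq S] (P : Matrix S S ℝ) (X : Finset S)

/-- The reweighted measure `π'`. -/
def rejFreeWeight (pd : S → ℝ) (s : S) : ℝ :=
  if s ∈ X then pd s else (1 - P s s) * pd s

theorem rejFree_of_mem {s : S} (hs : s ∈ X) (s' : S) : rejFree P X s s' = P s s' := by
  simp [rejFree, hs]

theorem rejFree_diag_of_notMem {s : S} (hs : s ∉ X) : rejFree P X s s = 0 := by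
  simp [rejFree, hs]

theorem one_sub_diag_mul_rejFree_of_notMem_of_ne {s s' : S} (hs : s ∉ X) (hdiag : P s s ≠ 1)
    (hne : s' ≠ s) : (1 - P s s) * rejFree P X s s' = P s s' := by
  have : 1 - P s s ≠ 0 := sub_ne_zero.mpr hdiag.symm
  simp [rejFree, hs, hne, mul_div_cancel₀ _ this]

theorem rejFree_nonneg (hPnn : ∀ s s', 0 ≤ P s s') (hdiag : ∀ s ∉ X, P s s < 1) (s s' : S) :
    0 ≤ rejFree P X s s' := by
  simp only [rejFree, Matrix.of_apply]
  split_ifs with hs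
  · exact hPnn s s'
  · exact le_rfl
  · exact div_nonneg (hPnn s s') (sub_nonneg.mpr (hdiag s hs).le)

theorem sum_rejFree_row (hProw : ∀ s, ∑ s', P s s' = 1) (hdiag : ∀ s ∉ X, P s s ≠ 1) (s : S) :
    ∑ s', rejFree P X s s' = 1 := by
  by_cases hs : s ∈ X
  · simp only [rejFree_of_mem P X hs, hProw]
  have hesc : 1 - P s s ≠ 0 := sub_ne_zero.mpr (hdiag s hs).symm
  have hrow : ∀ s', (1 - P s s) * rejFree P X s s' = P s s' - if s' = s then P s s else 0 := by
    intro s'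
    by_cases hne : s' = s
    · subst hne
      simp [rejFree_diag_of_notMem P X hs]
    · simp [one_sub_diag_mul_rejFree_of_notMem_of_ne P X hs (hdiag s hs) hne, hne]
  refine mul_left_cancel₀ hesc ?_
  rw [mul_sum, sum_congr rfl fun s' _ => hrow s', sum_sub_distrib, sum_ite_eq', hProw]
  simp

theorem rejFreeWeight_mul_rejFree_of_ne (pd : S → ℝ) (hdiag : ∀ s ∉ X, P s s ≠ 1) {s s' : S}
    (hne : s' ≠ s) : rejFreeWeight P X pd s * rejFree P X s s' = pd s * P s s' := by
  by_cases hs : s ∈ X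
  · simp [rejFreeWeight, hs, rejFree_of_mem P X hs]
  · rw [rejFreeWeight, if_neg hs, mul_comm (1 - P s s), mul_assoc,
      one_sub_diag_mul_rejFree_of_notMem_of_ne P X hs (hdiag s hs) hne]

theorem rejFree_detailedBalance (pd : S → ℝ) (hdb : ∀ s s', pd s * P s s' = pd s' * P s' s)
    (hdiag : ∀ s ∉ X, P s s ≠ 1) (s s' : S) :
    rejFreeWeight P X pd s * rejFree P X s s' = rejFreeWeight P X pd s' * rejFree P X s' s := by
  by_cases hne : s' = s
  · rw [hne]
  · rw [rejFreeWeight_mul_rejFree_of_ne P X pd hdiag hne,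
      rejFreeWeight_mul_rejFree_of_ne P X pd hdiag (Ne.symm hne), hdb]

end RejectionFree

theorem rejection_free_stochastic_and_detailed_balance_general
    {S : Type*} [Fintype S] [DecidableEq S]
    (P : Matrix S S ℝ) (pd : S → ℝ)
    (hPnn : ∀ s s', 0 ≤ P s s')
    (hProw : ∀ s, ∑ s', P s s' = 1)
    (hdb : ∀ s s', pd s * P s s' = pd s' * P s' s)
    (X : Finset S) (hdiag : ∀ s ∉ X, P s s < 1) :
    (∀ s s', 0 ≤ rejFree P X s s') ∧
    (∀ s, ∑ s', rejFree P X s s' = 1) ∧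
    (∀ s s',
      (if s ∈ X then pd s else (1 - P s s) * pd s) * rejFree P X s s' =
        (if s' ∈ X then pd s' else (1 - P s' s') * pd s') * rejFree P X s' s) := by
  have hdiag' : ∀ s ∉ X, P s s ≠ 1 := fun s hs => (hdiag s hs).ne
  exact ⟨rejFree_nonneg P X hPnn hdiag, sum_rejFree_row P X hProw hdiag',
    rejFree_detailedBalance P X pd hdb hdiag'⟩

theorem rejection_free_stochastic_and_detailed_balance
    {S : Type*} [Fintype S] [DecidableEq S]
    (P : Matrix S S ℝ) (pd : S → ℝ)
    (hPnn : ∀ s s', 0 ≤ P s s')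
    (hProw : ∀ s, ∑ s', P s s' = 1)
    (hpdnn : ∀ s, 0 ≤ pd s)
    (hpdsum : ∑ s, pd s = 1)
    (hdb : ∀ s s', pd s * P s s' = pd s' * P s' s)
    (X : Finset S) (hdiag : ∀ s ∉ X, P s s < 1) :
    (∀ s s', 0 ≤ rejFree P X s s') ∧
    (∀ s, ∑ s', rejFree P X s s' = 1) ∧
    (∀ s s',
      (if s ∈ X then pd s else (1 - P s s) * pd s) * rejFree P X s s' =
        (if s' ∈ X then pd s' else (1 - P s' s') * pd s') * rejFree P X s' s) :=
  rejection_free_stochastic_and_detailed_balance_general P pd hPnn hProw hdb X hdiag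
end

section
/- Let G = (V,E) be a finite, connected, bipartite, cubic graph, let A ⊆ E be a 2-factor of G, let x ∈ V, and let x' be any neighbor of x in G. Then there exists a path z_1 z_2 ⋯ z_{2k} in G (with the z_i pairwise distinct vertices and each z_i z_{i+1} ∈ E) such that z_1 = x, z_{2k} = x', z_i z_{i+1} ∉ A for every odd i with 1 ≤ i ≤ 2k−1, and z_i z_{i+1} ∈ A for every even i with 1 ≤ i ≤ 2k−1. -/
/-!
Since `G` is cubic, the edges outside the 2-factor `A` form a perfect matching `w ↦ M w`. Call `u`
an alternating successor of `w` when `s(w, M u) ∈ A`, so that `w`, `M u`, `u` extends an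
alternating path. In this digraph every vertex has two successors and two predecessors, so
reachability is symmetric; with connectivity of `G` this shows that `x'` or `M x'` is reachable
from `M x`. Successors keep the colour of a 2-colouring while `M` switches it, and `x'` has the
colour of `M x`, so `x'` itself is reachable. A shortest chain `M x = u₀ → ⋯ → uₙ = x'` then gives
the path `x, u₀, M u₁, u₁, …, M uₙ, uₙ`.
-/

open Finset

/-- The degree of a vertex `x` in the spanning subgraph `(V, A)`:
the number of edges of `A` incident to `x`. -/
def degA {V : Type*} [DecidableEq V] (A : Finset (Sym2 V)) (x : V) : ℕ :=
  (A.filter fun e => x ∈ e).card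

namespace Relation

variable {α : Type*} {r : α → α → Prop}

theorem ReflTransGen.exists_chain {a b : α} (h : ReflTransGen r a b) :
    ∃ n, ∃ f : ℕ → α, f 0 = a ∧ f n = b ∧ ∀ i < n, r (f i) (f (i + 1)) := by
  induction h with
  | refl => exact ⟨0, fun _ => a, rfl, rfl, by simp⟩
  | @tail c d _ hcd ih =>
    obtain ⟨n, f, hf0, hfn, hf⟩ := ih
    refine ⟨n + 1, fun i => if i ≤ n then f i else d, by simp [hf0], by simp, fun i hi => ?_⟩
    rcases (Nat.lt_succ_iff.mp hi).lt_or_eq with hi | rfl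
    · simp [hi.le, Nat.succ_le_of_lt hi, hf i hi]
    · simp [hfn, hcd]

theorem reflTransGen_of_chain {n : ℕ} {f : ℕ → α} (hf : ∀ i < n, r (f i) (f (i + 1))) :
    ∀ i ≤ n, ReflTransGen r (f 0) (f i)
  | 0, _ => .refl
  | i + 1, hi => (reflTransGen_of_chain hf i (by omega)).tail (hf i (by omega))

theorem exists_chain_shortcut {a b : α} {n : ℕ} {f : ℕ → α} (hf0 : f 0 = a) (hfn : f n = b)
    (hf : ∀ i < n, r (f i) (f (i + 1))) {i j : ℕ} (hij : i < j) (hjn : j ≤ n)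
    (hfij : f i = f j) :
    ∃ g : ℕ → α, g 0 = a ∧ g (n - (j - i)) = b ∧ ∀ t < n - (j - i), r (g t) (g (t + 1)) := by
  refine ⟨fun t => if t ≤ i then f t else f (t + (j - i)), by simp [hf0], ?_, fun t ht => ?_⟩
  · by_cases hn : n - (j - i) ≤ i
    · have : n = j := by omega
      subst this
      simp only [hn, if_true]
      rw [show n - (n - i) = i by omega, hfij, hfn]
    · simp only [hn, if_false]
      rw [show n - (j - i) + (j - i) = n by omega, hfn]
  · rcases lt_trichotomy t i with hti | rfl | hti
    · simpa [hti.le, Nat.succ_le_of_lt hti] using hf t (by omega)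
    · simpa [hfij, show t + 1 + (j - t) = j + 1 by omega] using hf j (by omega)
    · have := hf (t + (j - i)) (by omega)
      simpa [hti.not_ge, show ¬ t + 1 ≤ i by omega, show t + (j - i) + 1 = t + 1 + (j - i) by omega]

theorem ReflTransGen.exists_injective_chain {a b : α} (h : ReflTransGen r a b) :
    ∃ n, ∃ f : ℕ → α, f 0 = a ∧ f n = b ∧ (∀ i < n, r (f i) (f (i + 1))) ∧
      ∀ i ≤ n, ∀ j ≤ n, f i = f j → i = j := by
  classical
  have hex := h.exists_chain
  obtain ⟨f, hf0, hfn, hf⟩ := Nat.find_spec hex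
  refine ⟨Nat.find hex, f, hf0, hfn, hf, ?_⟩
  have key : ∀ i j, i < j → j ≤ Nat.find hex → f i ≠ f j := fun i j hij hjn hfij =>
    Nat.find_min hex (by omega) (exists_chain_shortcut hf0 hfn hf hij hjn hfij)
  intro i hi j hj hfij
  by_contra hne
  rcases Nat.lt_or_gt_of_ne hne with hlt | hlt
  · exact key i j hlt hj hfij
  · exact key j i hlt hi hfij.symm

/-- Double counting: the edges starting in `R` all end in `R`, and they are as many as the edges
ending in `R`. -/
theorem mem_of_rel_of_forall_card_eq [Fintype α] [DecidableRel r]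
    (hbal : ∀ w, #{u | r w u} = #{u | r u w}) {R : Finset α}
    (hR : ∀ w ∈ R, ∀ u, r w u → u ∈ R) {u w : α} (hu : u ∈ R) (hwu : r w u) : w ∈ R := by
  have hsum : ∑ u ∈ R, #(R.bipartiteBelow r u) = ∑ u ∈ R, #{w | r w u} := by
    rw [← sum_card_bipartiteAbove_eq_sum_card_bipartiteBelow]
    refine sum_congr rfl fun w hw => ?_
    rw [← hbal w]
    congr 1
    ext v
    simp only [bipartiteAbove, mem_filter, mem_univ, true_and]
    exact ⟨And.right, fun h => ⟨hR w hw v h, h⟩⟩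
  have hsub : ∀ u ∈ R, R.bipartiteBelow r u ⊆ ({w | r w u} : Finset α) := fun u _ =>
    monotone_filter_left _ (subset_univ R)
  have heq := (sum_eq_sum_iff_of_le fun u hu => card_le_card (hsub u hu)).mp hsum u hu
  have := eq_of_subset_of_card_le (hsub u hu) heq.ge
  have hw : w ∈ ({w | r w u} : Finset α) := by simpa using hwu
  rw [← this] at hw
  exact (mem_filter.mp hw).1

theorem ReflTransGen.symm_of_forall_card_eq [Fintype α] [DecidableRel r]
    (hbal : ∀ w, #{u | r w u} = #{u | r u w}) {a b : α} (h : ReflTransGen r a b) :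
    ReflTransGen r b a := by
  classical
  induction h using ReflTransGen.head_induction_on with
  | refl => exact .refl
  | head hac _ ih =>
    have hR : ∀ w ∈ ({u | ReflTransGen r b u} : Finset α), ∀ u, r w u →
        u ∈ ({u | ReflTransGen r b u} : Finset α) := by
      simp only [mem_filter, mem_univ, true_and]
      exact fun w hw u hwu => hw.tail hwu
    simpa using mem_of_rel_of_forall_card_eq hbal hR (by simpa using ih) hac

end Relation

open Relation

lemma Fin.two_eq_of_ne_of_ne : ∀ a b c : Fin 2, a ≠ b → c ≠ b → a = c := by decide

section Interleave

variable {α : Type*} {M : α → α} {f : ℕ → α}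

def interleave (M : α → α) (f : ℕ → α) (i : ℕ) : α :=
  if Even i then M (f (i / 2)) else f (i / 2)

@[simp]
lemma interleave_two_mul (a : ℕ) : interleave M f (2 * a) = M (f a) := by
  simp [interleave]

@[simp]
lemma interleave_two_mul_add_one (a : ℕ) : interleave M f (2 * a + 1) = f a := by
  simp [interleave, Nat.add_div_of_dvd_right]

lemma interleave_injOn (hM : Function.Injective M) {n : ℕ}
    (hf : ∀ i ≤ n, ∀ j ≤ n, f i = f j → i = j) (hMf : ∀ i ≤ n, ∀ j ≤ n, M (f i) ≠ f j) :
    ∀ i j, i < 2 * (n + 1) → j < 2 * (n + 1) → interleave M f i = interleave M f j → i = j := by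
  intro i j hi hj hij
  obtain ⟨a, rfl | rfl⟩ := Nat.even_or_odd' i <;> obtain ⟨b, rfl | rfl⟩ := Nat.even_or_odd' j <;>
    simp only [interleave_two_mul, interleave_two_mul_add_one] at hij
  · rw [hf a (by omega) b (by omega) (hM hij)]
  · exact absurd hij (hMf a (by omega) b (by omega))
  · exact absurd hij.symm (hMf b (by omega) a (by omega))
  · rw [hf a (by omega) b (by omega) hij]

end Interleave

section

variable {V : Type*} {G : SimpleGraph V} {A : Finset (Sym2 V)} {M : V → V}

def IsPartnerMap (G : SimpleGraph V) (A : Finset (Sym2 V)) (M : V → V) : Prop :=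
  ∀ w v, G.Adj w v ∧ s(w, v) ∉ A ↔ v = M w

lemma adj_partner (hM : IsPartnerMap G A M) (w : V) : G.Adj w (M w) :=
  ((hM w (M w)).mpr rfl).1

lemma partner_notMem (hM : IsPartnerMap G A M) (w : V) :
    s(w, M w) ∉ A :=
  ((hM w (M w)).mpr rfl).2

lemma partner_involutive (hM : IsPartnerMap G A M) :
    Function.Involutive M := fun w =>
  ((hM (M w) w).mp ⟨(adj_partner hM w).symm, Sym2.eq_swap ▸ partner_notMem hM w⟩).symm

def altStep (A : Finset (Sym2 V)) (M : V → V) (w u : V) : Prop :=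
  s(w, M u) ∈ A

lemma degA_eq_card_filter [Fintype V] [DecidableEq V] (w : V) :
    degA A w = #{v | s(w, v) ∈ A} := by
  have : A.filter (w ∈ ·) = image (fun v => s(w, v)) {v | s(w, v) ∈ A} := by
    ext e
    simp only [mem_filter, mem_image, mem_univ, true_and, Sym2.mem_iff_exists]
    constructor
    · rintro ⟨he, v, rfl⟩
      exact ⟨v, he, rfl⟩
    · rintro ⟨v, hv, rfl⟩
      exact ⟨hv, v, rfl⟩
  rw [degA, this, card_image_of_injective _ fun _ _ => Sym2.congr_right.mp]

lemma exists_forall_adj_notMem_iff [Fintype V] [DecidableEq V] [DecidableRel G.Adj]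
    (hA : A ⊆ G.edgeFinset) {w : V} (hdeg : G.degree w = degA A w + 1) :
    ∃ m, ∀ v, G.Adj w v ∧ s(w, v) ∉ A ↔ v = m := by
  have hAnbr : {v ∈ G.neighborFinset w | s(w, v) ∈ A} = ({v | s(w, v) ∈ A} : Finset V) := by
    ext v
    simp only [mem_filter, SimpleGraph.mem_neighborFinset, mem_univ, true_and,
      and_iff_right_iff_imp]
    exact fun hv => G.mem_edgeFinset.mp (hA hv)
  have hcard : #{v ∈ G.neighborFinset w | s(w, v) ∉ A} = 1 := by
    have := card_filter_add_card_filter_not (s := G.neighborFinset w) (fun v => s(w, v) ∈ A)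
    rw [hAnbr, ← degA_eq_card_filter, G.card_neighborFinset_eq_degree, hdeg] at this
    omega
  obtain ⟨m, hm⟩ := card_eq_one.mp hcard
  refine ⟨m, fun v => ?_⟩
  simpa using congrArg (v ∈ ·) hm

lemma card_altStep_out [Fintype V] [DecidableEq V] [DecidableRel (altStep A M)]
    (hM : IsPartnerMap G A M) (w : V) :
    #{u | altStep A M w u} = degA A w := by
  have hMM := partner_involutive hM
  rw [degA_eq_card_filter]
  refine card_nbij' M M (fun u hu => ?_) (fun v hv => ?_) (fun u _ => hMM u) (fun v _ => hMM v)
  · rw [mem_coe, mem_filter] at hu ⊢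
    exact ⟨mem_univ _, hu.2⟩
  · rw [mem_coe, mem_filter] at hv ⊢
    rw [altStep, hMM]
    exact ⟨mem_univ _, hv.2⟩

lemma card_altStep_in [Fintype V] [DecidableEq V] [DecidableRel (altStep A M)] (u : V) :
    #{w | altStep A M w u} = degA A (M u) := by
  rw [degA_eq_card_filter]
  congr 1
  ext w
  rw [mem_filter, mem_filter, altStep, Sym2.eq_swap]

lemma reflTransGen_altStep_or [Fintype V] [DecidableEq V] (hM : IsPartnerMap G A M)
    (hconn : G.Connected) {d : ℕ} (hreg : ∀ w, degA A w = d) (a v : V) :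
    ReflTransGen (altStep A M) a v ∨ ReflTransGen (altStep A M) a (M v) := by
  classical
  have hMM := partner_involutive hM
  have hsymm {u w : V} (h : altStep A M u w) : ReflTransGen (altStep A M) w u :=
    (ReflTransGen.single h).symm_of_forall_card_eq fun w => by
      rw [card_altStep_out hM, card_altStep_in, hreg, hreg]
  have hstep {u w : V} (h : s(u, w) ∈ A) : altStep A M u (M w) := by
    rwa [altStep, hMM]
  induction (SimpleGraph.reachable_iff_reflTransGen a v).mp (hconn a v) with
  | refl => exact .inl .refl
  | @tail b c _ hbc ih =>
    by_cases hbcA : s(b, c) ∈ A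
    · rcases ih with hb | hMb
      · exact .inr (hb.tail (hstep hbcA))
      · exact .inl (hMb.trans (hsymm (hstep (Sym2.eq_swap ▸ hbcA))))
    · obtain rfl : c = M b := (hM b c).mp ⟨hbc, hbcA⟩
      rw [hMM]
      exact ih.symm

lemma adj_interleave [Fintype V] [DecidableRel G.Adj] (hA : A ⊆ G.edgeFinset)
    (hM : IsPartnerMap G A M)
    {f : ℕ → V} {n : ℕ} (hf : ∀ i < n, altStep A M (f i) (f (i + 1))) :
    ∀ i, i + 1 < 2 * (n + 1) → G.Adj (interleave M f i) (interleave M f (i + 1)) := by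
  intro i hi
  obtain ⟨a, rfl | rfl⟩ := Nat.even_or_odd' i
  · simpa using (adj_partner hM (f a)).symm
  · rw [show 2 * a + 1 + 1 = 2 * (a + 1) by ring, interleave_two_mul, interleave_two_mul_add_one]
    exact G.mem_edgeFinset.mp (hA (hf a (by omega)))

lemma even_iff_interleave_notMem (hM : IsPartnerMap G A M)
    {f : ℕ → V} {n : ℕ} (hf : ∀ i < n, altStep A M (f i) (f (i + 1))) :
    ∀ i, i + 1 < 2 * (n + 1) → (Even i ↔ s(interleave M f i, interleave M f (i + 1)) ∉ A) := by
  intro i hi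
  obtain ⟨a, rfl | rfl⟩ := Nat.even_or_odd' i
  · simpa [Sym2.eq_swap] using partner_notMem hM (f a)
  · rw [show 2 * a + 1 + 1 = 2 * (a + 1) by ring, interleave_two_mul, interleave_two_mul_add_one]
    simpa [altStep] using hf a (by omega)

namespace SimpleGraph.Coloring

variable (c : G.Coloring (Fin 2))

lemma eq_of_altStep [Fintype V] [DecidableRel G.Adj] (hA : A ⊆ G.edgeFinset)
    (hM : IsPartnerMap G A M)
    {w u : V} (h : altStep A M w u) : c u = c w :=
  Fin.two_eq_of_ne_of_ne _ _ _ (c.valid (adj_partner hM u))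
    (c.valid (G.mem_edgeFinset.mp (hA h)))

lemma eq_of_reflTransGen_altStep [Fintype V] [DecidableRel G.Adj] (hA : A ⊆ G.edgeFinset)
    (hM : IsPartnerMap G A M) {w u : V}
    (h : ReflTransGen (altStep A M) w u) : c u = c w := by
  induction h with
  | refl => rfl
  | tail _ hstep ih => rw [c.eq_of_altStep hA hM hstep, ih]

lemma partner_ne_of_eq (hM : IsPartnerMap G A M) {u w : V}
    (h : c u = c w) : M u ≠ w := by
  rintro rfl
  exact c.valid (adj_partner hM u) h

end SimpleGraph.Coloring

end

/-- In a finite connected bipartite cubic graph with a 2-factor `A`, between any vertex `x`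
and any neighbour `x'` there is an alternating path `z₁ z₂ ⋯ z_{2k}` (here 0-indexed as
`z 0, …, z (2k-1)`) whose odd-numbered edges (1-indexed) are vacant and whose even-numbered
edges are occupied. -/
theorem exists_alternating_path
    {V : Type*} [Fintype V] [DecidableEq V]
    (G : SimpleGraph V) [DecidableRel G.Adj]
    (hconn : G.Connected) (hbip : G.Colorable 2)
    (hcubic : ∀ w, G.degree w = 3)
    (A : Finset (Sym2 V)) (hA : A ⊆ G.edgeFinset)
    (h2f : ∀ w, degA A w = 2)
    (x x' : V) (hadj : G.Adj x x') :
    ∃ (k : ℕ) (z : ℕ → V), 1 ≤ k ∧ z 0 = x ∧ z (2 * k - 1) = x' ∧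
      (∀ i j, i < 2 * k → j < 2 * k → z i = z j → i = j) ∧
      (∀ i, i + 1 < 2 * k → G.Adj (z i) (z (i + 1))) ∧
      (∀ i, i + 1 < 2 * k → (Even i ↔ s(z i, z (i + 1)) ∉ A)) := by
  classical
  obtain ⟨c⟩ := hbip
  choose M hM using fun w => exists_forall_adj_notMem_iff hA (w := w) (by rw [hcubic, h2f])
  have hMM := partner_involutive hM
  have hreach : ReflTransGen (altStep A M) (M x) x' := by
    refine (reflTransGen_altStep_or hM hconn h2f (M x) x').resolve_right fun h => ?_
    have hx' : c x' = c (M x) :=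
      Fin.two_eq_of_ne_of_ne _ _ _ (c.valid hadj).symm (c.valid (adj_partner hM x)).symm
    exact c.partner_ne_of_eq hM (hx'.trans (c.eq_of_reflTransGen_altStep hA hM h).symm) rfl
  obtain ⟨n, f, hf0, hfn, hstep, hinj⟩ := hreach.exists_injective_chain
  have hcol : ∀ i ≤ n, c (f i) = c (M x) := fun i hi =>
    hf0 ▸ c.eq_of_reflTransGen_altStep hA hM (reflTransGen_of_chain hstep i hi)
  refine ⟨n + 1, interleave M f, by omega, by simp [interleave, hf0, hMM x], ?_,
    interleave_injOn hMM.injective hinj fun i hi j hj =>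
      c.partner_ne_of_eq hM ((hcol i hi).trans (hcol j hj).symm),
    adj_interleave hA hM hstep, even_iff_interleave_notMem hM hstep⟩
  rw [show 2 * (n + 1) - 1 = 2 * n + 1 by omega, interleave_two_mul_add_one, hfn]
end

section
/- Let G = (V,E) be a finite, connected, bipartite, cubic graph, let A ⊆ E be a 2-factor of G, and let x, y ∈ V. Then there exists a finite sequence of FPL worm moves transforming the state (A,x,x) into the state (A,y,y), and likewise a finite sequence transforming (A,y,y) into (A,x,x). -/
open Finset

/-- `(A, u, v)` belongs to the worm state space `S(G)`: `A` is a set of edges of `G`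
whose odd-degree vertices are exactly `{u, v}` when `u ≠ v`, and none when `u = v`. -/
def SGstate {V : Type*} [DecidableEq V] (G : SimpleGraph V) [DecidableRel G.Adj] [Fintype V]
    (A : Finset (Sym2 V)) (u v : V) : Prop :=
  A ⊆ G.edgeFinset ∧ ∀ x, Odd (degA A x) ↔ (u ≠ v ∧ (x = u ∨ x = v))

/-- `(A, u, v)` belongs to the fully-packed worm state space `R(G)`. -/
def RGstate {V : Type*} [DecidableEq V] (G : SimpleGraph V) [DecidableRel G.Adj] [Fintype V]
    (A : Finset (Sym2 V)) (u v : V) : Prop :=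
  SGstate G A u v ∧ (∀ x, 1 ≤ degA A x) ∧ 4 ≤ degA A u + degA A v

/-- A single FPL worm move between states `(A, u, v)` and `(B, x, y)`. -/
def WormMove {V : Type*} [DecidableEq V] (G : SimpleGraph V) [DecidableRel G.Adj]
    (p q : Finset (Sym2 V) × V × V) : Prop :=
  match p, q with
  | (A, u, v), (B, x, y) =>
    -- (i) defects coincide: add the vacant edge, putting one defect at each endpoint
    (u = v ∧ ∃ u', G.Adj u u' ∧ s(u, u') ∉ A ∧ B = insert s(u, u') A ∧
      ((x = u' ∧ y = u) ∨ (x = u ∧ y = u'))) ∨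
    -- (ii) a degree-1 defect moves by adding a vacant edge
    (u ≠ v ∧ degA A u = 1 ∧ ∃ u', G.Adj u u' ∧ s(u, u') ∉ A ∧
      B = insert s(u, u') A ∧ x = u' ∧ y = v) ∨
    (u ≠ v ∧ degA A v = 1 ∧ ∃ v', G.Adj v v' ∧ s(v, v') ∉ A ∧
      B = insert s(v, v') A ∧ x = u ∧ y = v') ∨
    -- (iii) two degree-3 defects: one moves by deleting an occupied edge
    (u ≠ v ∧ degA A u = 3 ∧ degA A v = 3 ∧ ∃ u', s(u, u') ∈ A ∧
      B = A.erase s(u, u') ∧ x = u' ∧ y = v) ∨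
    (u ≠ v ∧ degA A u = 3 ∧ degA A v = 3 ∧ ∃ v', s(v, v') ∈ A ∧
      B = A.erase s(v, v') ∧ x = u ∧ y = v')

lemma degA_insert {V : Type*} [DecidableEq V] (A : Finset (Sym2 V)) (e : Sym2 V)
    (he : e ∉ A) (z : V) :
    degA (insert e A) z = degA A z + (if z ∈ e then 1 else 0) := by
  unfold degA
  rw [Finset.filter_insert]
  by_cases h : z ∈ e
  · simp only [h, if_true]
    rw [Finset.card_insert_of_notMem (fun hc => he (Finset.mem_filter.1 hc).1)]
  · simp [h]

lemma degA_erase {V : Type*} [DecidableEq V] (A : Finset (Sym2 V)) (e : Sym2 V)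
    (he : e ∈ A) (z : V) :
    degA (A.erase e) z = degA A z - (if z ∈ e then 1 else 0) := by
  unfold degA
  rw [Finset.filter_erase]
  by_cases h : z ∈ e
  · rw [Finset.card_erase_of_mem (Finset.mem_filter.2 ⟨he, h⟩)]
    simp [h]
  · rw [Finset.erase_eq_of_notMem (s := A.filter (fun e => z ∈ e)) (a := e)
      (fun hc => h (Finset.mem_filter.1 hc).2)]
    simp [h]

lemma partner {V : Type*} [Fintype V] [DecidableEq V]
    (G : SimpleGraph V) [DecidableRel G.Adj]
    (hcubic : ∀ w, G.degree w = 3)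
    (A : Finset (Sym2 V)) (hA : A ⊆ G.edgeFinset)
    (h2f : ∀ w, degA A w = 2) (x : V) :
    ∃ x', G.Adj x x' ∧ s(x, x') ∉ A ∧
      ∀ z, G.Adj x z → s(x, z) ∉ A → z = x' := by
  have hinc : G.edgeFinset.filter (fun e => x ∈ e) = G.incidenceFinset x := by
    ext e
    simp [SimpleGraph.mem_incidenceFinset, SimpleGraph.incidenceSet,
      SimpleGraph.mem_edgeFinset, Finset.mem_filter]
  have hcard : ((G.edgeFinset \ A).filter (fun e => x ∈ e)).card = 1 := by
    have hsd : (G.edgeFinset \ A).filter (fun e => x ∈ e)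
        = G.edgeFinset.filter (fun e => x ∈ e) \ A.filter (fun e => x ∈ e) := by
      ext e; simp [Finset.mem_filter, Finset.mem_sdiff]; tauto
    rw [hsd, Finset.card_sdiff_of_subset (Finset.filter_subset_filter _ hA)]
    rw [hinc, SimpleGraph.card_incidenceFinset_eq_degree, hcubic]
    have : (A.filter (fun e => x ∈ e)).card = 2 := h2f x
    rw [this]
  obtain ⟨e, he⟩ := Finset.card_eq_one.1 hcard
  have hem : e ∈ (G.edgeFinset \ A).filter (fun e => x ∈ e) := by rw [he]; simp
  rw [Finset.mem_filter, Finset.mem_sdiff] at hem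
  obtain ⟨⟨heE, heA⟩, hex⟩ := hem
  obtain ⟨x', rfl⟩ := Sym2.mem_iff_exists.1 hex
  refine ⟨x', ?_, heA, ?_⟩
  · rwa [SimpleGraph.mem_edgeFinset] at heE
  · intro z hz hzA
    have : s(x, z) ∈ (G.edgeFinset \ A).filter (fun e => x ∈ e) := by
      rw [Finset.mem_filter, Finset.mem_sdiff, SimpleGraph.mem_edgeFinset]
      exact ⟨⟨hz, hzA⟩, by simp⟩
    rw [he, Finset.mem_singleton] at this
    exact (Sym2.congr_right.1 this.symm).symm

lemma step_adj {V : Type*} [Fintype V] [DecidableEq V]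
    (G : SimpleGraph V) [DecidableRel G.Adj]
    (hcubic : ∀ w, G.degree w = 3)
    (A : Finset (Sym2 V)) (hA : A ⊆ G.edgeFinset)
    (h2f : ∀ w, degA A w = 2) {x y : V} (hxy : G.Adj x y) :
    Relation.ReflTransGen (WormMove G) (A, x, x) (A, y, y) := by
  have hne : x ≠ y := hxy.ne
  by_cases hmem : s(x, y) ∈ A
  · -- six-move sequence
    obtain ⟨x', hxx', hnx, hux⟩ := partner G hcubic A hA h2f x
    obtain ⟨y', hyy', hny, huy⟩ := partner G hcubic A hA h2f y
    have hx'y : x' ≠ y := fun h => hnx (h ▸ hmem)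
    have hy'x : y' ≠ x := fun h => hny (by rwa [h, Sym2.eq_swap])
    have hx'y' : x' ≠ y' := by
      intro h
      obtain ⟨z, hz1, hz2, hz3⟩ := partner G hcubic A hA h2f x'
      have h1 : x = z := hz3 x hxx'.symm (by rwa [Sym2.eq_swap])
      have h2 : y = z := hz3 y (h ▸ hyy'.symm) (by
        rw [show s(x', y) = s(y, y') from by rw [h, Sym2.eq_swap]]; exact hny)
      exact hne (h1.trans h2.symm)
    have hx'x : x' ≠ x := hxx'.ne'
    have hy'y : y' ≠ y := hyy'.ne'
    -- edge distinctness
    have e12 : s(x, x') ≠ s(x, y) := by simp [Sym2.eq_iff]; tauto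
    have e13 : s(x, x') ≠ s(y, y') := by simp [Sym2.eq_iff]; tauto
    have e23 : s(x, y) ≠ s(y, y') := by simp [Sym2.eq_iff]; tauto
    set e1 := s(x, x') with he1
    set e2 := s(x, y) with he2
    set e3 := s(y, y') with he3
    set B1 := insert e1 A with hB1
    set B2 := B1.erase e2 with hB2
    set B3 := insert e3 B2 with hB3
    set B4 := B3.erase e1 with hB4
    set B5 := insert e2 B4 with hB5
    -- memberships
    have he2B1 : e2 ∈ B1 := Finset.mem_insert_of_mem hmem
    have he3B2 : e3 ∉ B2 := by
      intro h
      rcases Finset.mem_insert.1 (Finset.mem_of_mem_erase h) with h | h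
      · exact e13 h.symm
      · exact hny h
    have he1B3 : e1 ∈ B3 := Finset.mem_insert_of_mem
      (Finset.mem_erase.2 ⟨e12, Finset.mem_insert_self _ _⟩)
    have he2B4 : e2 ∉ B4 := by
      intro h
      rcases Finset.mem_insert.1 (Finset.mem_of_mem_erase h) with h | h
      · exact e23 h
      · exact (Finset.mem_erase.1 h).1 rfl
    have he3B5 : e3 ∈ B5 := Finset.mem_insert_of_mem
      (Finset.mem_erase.2 ⟨fun h => e13 h.symm, Finset.mem_insert_self _ _⟩)
    have hfinal : B5.erase e3 = A := by
      ext a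
      simp only [hB5, hB4, hB3, hB2, hB1, Finset.mem_erase, Finset.mem_insert]
      constructor
      · rintro ⟨ha3, h | ⟨ha1, h | ⟨ha2, h | hA'⟩⟩⟩
        · exact h ▸ hmem
        · exact absurd h ha3
        · exact absurd h ha1
        · exact hA'
      · intro haA
        have ha1 : a ≠ e1 := fun h => hnx (h ▸ haA)
        have ha3 : a ≠ e3 := fun h => hny (h ▸ haA)
        by_cases ha2 : a = e2
        · exact ⟨ha3, Or.inl ha2⟩
        · exact ⟨ha3, Or.inr ⟨ha1, Or.inr ⟨ha2, Or.inr haA⟩⟩⟩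
    -- degree computations
    have d1 : ∀ z, degA B1 z = degA A z + (if z ∈ e1 then 1 else 0) :=
      degA_insert A e1 hnx
    have d2 : ∀ z, degA B2 z = degA B1 z - (if z ∈ e2 then 1 else 0) :=
      degA_erase B1 e2 he2B1
    have d3 : ∀ z, degA B3 z = degA B2 z + (if z ∈ e3 then 1 else 0) :=
      degA_insert B2 e3 he3B2
    have d4 : ∀ z, degA B4 z = degA B3 z - (if z ∈ e1 then 1 else 0) :=
      degA_erase B3 e1 he1B3
    have d5 : ∀ z, degA B5 z = degA B4 z + (if z ∈ e2 then 1 else 0) :=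
      degA_insert B4 e2 he2B4
    have d1x : degA B1 x = 3 := by rw [d1, h2f]; simp [he1]
    have d1x' : degA B1 x' = 3 := by rw [d1, h2f]; simp [he1]
    have d2y : degA B2 y = 1 := by
      rw [d2, d1, h2f]; simp [he1, he2, Sym2.mem_iff, hne, hne.symm, hx'y, hx'y.symm, hy'x, hy'x.symm, hx'y', hx'y'.symm, hx'x, hx'x.symm, hy'y, hy'y.symm]
    have d3y' : degA B3 y' = 3 := by
      rw [d3, d2, d1, h2f]
      simp [he1, he2, he3, Sym2.mem_iff, hne, hne.symm, hx'y, hx'y.symm, hy'x, hy'x.symm, hx'y', hx'y'.symm, hx'x, hx'x.symm, hy'y, hy'y.symm]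
    have d3x' : degA B3 x' = 3 := by
      rw [d3, d2, d1, h2f]
      simp [he1, he2, he3, Sym2.mem_iff, hne, hne.symm, hx'y, hx'y.symm, hy'x, hy'x.symm, hx'y', hx'y'.symm, hx'x, hx'x.symm, hy'y, hy'y.symm]
    have d4x : degA B4 x = 1 := by
      rw [d4, d3, d2, d1, h2f]
      simp [he1, he2, he3, Sym2.mem_iff, hne, hne.symm, hx'y, hx'y.symm, hy'x, hy'x.symm, hx'y', hx'y'.symm, hx'x, hx'x.symm, hy'y, hy'y.symm]
    have d4y' : degA B4 y' = 3 := by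
      rw [d4, d3y']; simp [he1, Sym2.mem_iff, hne, hne.symm, hx'y, hx'y.symm, hy'x, hy'x.symm, hx'y', hx'y'.symm, hx'x, hx'x.symm, hy'y, hy'y.symm]
    have d5y' : degA B5 y' = 3 := by
      rw [d5, d4y']; simp [he2, Sym2.mem_iff, hne, hne.symm, hx'y, hx'y.symm, hy'x, hy'x.symm, hx'y', hx'y'.symm, hx'x, hx'x.symm, hy'y, hy'y.symm]
    have d5y : degA B5 y = 3 := by
      rw [d5, d4, d3, d2, d1, h2f]
      simp [he1, he2, he3, Sym2.mem_iff, hne, hne.symm, hx'y, hx'y.symm, hy'x, hy'x.symm, hx'y', hx'y'.symm, hx'x, hx'x.symm, hy'y, hy'y.symm]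
    -- adjacency facts
    have hxyadj : G.Adj x y := hxy
    -- the six moves
    have m1 : WormMove G (A, x, x) (B1, x, x') :=
      Or.inl ⟨rfl, x', hxx', hnx, rfl, Or.inr ⟨rfl, rfl⟩⟩
    have m2 : WormMove G (B1, x, x') (B2, y, x') :=
      Or.inr (Or.inr (Or.inr (Or.inl ⟨fun h => hx'x h.symm, d1x, d1x',
        y, he2B1, rfl, rfl, rfl⟩)))
    have m3 : WormMove G (B2, y, x') (B3, y', x') :=
      Or.inr (Or.inl ⟨fun h => hx'y h.symm, d2y, y', hyy', he3B2, rfl, rfl, rfl⟩)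
    have m4 : WormMove G (B3, y', x') (B4, y', x) :=
      Or.inr (Or.inr (Or.inr (Or.inr ⟨fun h => hx'y' h.symm, d3y', d3x',
        x, by rw [Sym2.eq_swap]; exact he1B3, by rw [Sym2.eq_swap], rfl, rfl⟩)))
    have m5 : WormMove G (B4, y', x) (B5, y', y) :=
      Or.inr (Or.inr (Or.inl ⟨hy'x, d4x, y, hxyadj, he2B4, rfl, rfl, rfl⟩))
    have m6 : WormMove G (B5, y', y) (A, y, y) :=
      Or.inr (Or.inr (Or.inr (Or.inl ⟨hy'y, d5y', d5y,
        y, by rw [Sym2.eq_swap]; exact he3B5, by rw [Sym2.eq_swap]; exact hfinal.symm, rfl, rfl⟩)))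
    exact ((((((Relation.ReflTransGen.single m1).trans
      (Relation.ReflTransGen.single m2)).trans
      (Relation.ReflTransGen.single m3)).trans
      (Relation.ReflTransGen.single m4)).trans
      (Relation.ReflTransGen.single m5)).trans
      (Relation.ReflTransGen.single m6))
  · -- two-move sequence
    have m1 : WormMove G (A, x, x) (insert s(x, y) A, x, y) :=
      Or.inl ⟨rfl, y, hxy, hmem, rfl, Or.inr ⟨rfl, rfl⟩⟩
    have dx : degA (insert s(x, y) A) x = 3 := by
      rw [degA_insert A _ hmem, h2f]; simp
    have dy : degA (insert s(x, y) A) y = 3 := by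
      rw [degA_insert A _ hmem, h2f]; simp
    have m2 : WormMove G (insert s(x, y) A, x, y) (A, y, y) :=
      Or.inr (Or.inr (Or.inr (Or.inl ⟨hne, dx, dy, y,
        Finset.mem_insert_self _ _, (Finset.erase_insert hmem).symm, rfl, rfl⟩)))
    exact (Relation.ReflTransGen.single m1).trans (Relation.ReflTransGen.single m2)

/-- On a finite, connected, bipartite, cubic graph with a 2-factor `A`, the states
`(A, x, x)` and `(A, y, y)` intercommunicate under FPL worm moves. -/
theorem eulerian_defect_move
    {V : Type*} [Fintype V] [DecidableEq V]
    (G : SimpleGraph V) [DecidableRel G.Adj]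
    (hconn : G.Connected) (hbip : G.Colorable 2)
    (hcubic : ∀ w, G.degree w = 3)
    (A : Finset (Sym2 V)) (hA : A ⊆ G.edgeFinset)
    (h2f : ∀ w, degA A w = 2) (x y : V) :
    Relation.ReflTransGen (WormMove G) (A, x, x) (A, y, y) ∧
    Relation.ReflTransGen (WormMove G) (A, y, y) (A, x, x) := by
  have key : ∀ a b : V, G.Walk a b →
      Relation.ReflTransGen (WormMove G) (A, a, a) (A, b, b) := by
    intro a b w
    induction w with
    | nil => exact Relation.ReflTransGen.refl
    | cons h p ih => exact (step_adj G hcubic A hA h2f h).trans ih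
  obtain ⟨w⟩ := hconn x y
  exact ⟨key x y w, key y x w.reverse⟩
end

section
/- Let G = (V,E) be a finite, connected, bipartite, cubic graph, let A ⊆ E be a 2-factor of G, and let P = z_1 z_2 ⋯ z_{2k} be a path in G (pairwise distinct vertices, each z_i z_{i+1} ∈ E) such that z_i z_{i+1} ∉ A for every odd i and z_i z_{i+1} ∈ A for every even i, 1 ≤ i ≤ 2k−1. Let E(P) = {z_i z_{i+1} : 1 ≤ i ≤ 2k−1}. Then there exists a finite sequence of FPL worm moves transforming the state (A, z_1, z_1) into the state (A △ E(P), z_{2k}, z_1), where △ denotes symmetric difference. -/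
open Finset

lemma degA_insert_mem {V : Type*} [DecidableEq V] {A : Finset (Sym2 V)} {e : Sym2 V}
    (he : e ∉ A) {x : V} (hx : x ∈ e) : degA (insert e A) x = degA A x + 1 := by
  unfold degA
  rw [Finset.filter_insert, if_pos hx,
    Finset.card_insert_of_notMem (fun h => he (Finset.mem_filter.mp h).1)]

lemma degA_insert_notMem {V : Type*} [DecidableEq V] {A : Finset (Sym2 V)} {e : Sym2 V}
    {x : V} (hx : x ∉ e) : degA (insert e A) x = degA A x := by
  unfold degA
  rw [Finset.filter_insert, if_neg hx]

lemma degA_erase_mem {V : Type*} [DecidableEq V] {A : Finset (Sym2 V)} {e : Sym2 V}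
    (he : e ∈ A) {x : V} (hx : x ∈ e) : degA (A.erase e) x + 1 = degA A x := by
  unfold degA
  rw [Finset.filter_erase, Finset.card_erase_of_mem (Finset.mem_filter.mpr ⟨he, hx⟩)]
  have h0 : 0 < (A.filter fun e' => x ∈ e').card :=
    Finset.card_pos.mpr ⟨e, Finset.mem_filter.mpr ⟨he, hx⟩⟩
  omega

lemma degA_erase_notMem {V : Type*} [DecidableEq V] {A : Finset (Sym2 V)} {e : Sym2 V}
    {x : V} (hx : x ∉ e) : degA (A.erase e) x = degA A x := by
  unfold degA
  rw [Finset.filter_erase]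
  have hne : e ∉ A.filter fun e' => x ∈ e' := fun h => hx (Finset.mem_filter.mp h).2
  rw [Finset.erase_eq_of_notMem hne]

lemma symmDiff_insert_right_of_notMem {α : Type*} [DecidableEq α] {A S : Finset α} {e : α}
    (h1 : e ∉ A) : symmDiff A (insert e S) = insert e (symmDiff A S) := by
  ext a
  by_cases h : a = e <;> simp [Finset.mem_symmDiff, h, h1]

lemma symmDiff_insert_right_of_mem {α : Type*} [DecidableEq α] {A S : Finset α} {e : α}
    (h1 : e ∈ A) : symmDiff A (insert e S) = (symmDiff A S).erase e := by
  ext a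
  by_cases h : a = e <;> simp [Finset.mem_symmDiff, h, h1]

/-- Moving a defect along an alternating path: on a finite, connected, bipartite, cubic
graph with a 2-factor `A` and an alternating path `z 0, z 1, …, z (2k-1)` (vacant edges at
even 0-indexed positions, occupied edges at odd positions), a finite sequence of FPL worm
moves transforms `(A, z 0, z 0)` into `(A △ E(P), z (2k-1), z 0)`. -/
theorem worm_moves_along_alternating_path
    {V : Type*} [Fintype V] [DecidableEq V]
    (G : SimpleGraph V) [DecidableRel G.Adj]
    (hconn : G.Connected) (hbip : G.Colorable 2)
    (hcubic : ∀ w, G.degree w = 3)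
    (A : Finset (Sym2 V)) (hA : A ⊆ G.edgeFinset)
    (h2f : ∀ w, degA A w = 2)
    (k : ℕ) (hk : 1 ≤ k) (z : ℕ → V)
    (hinj : ∀ i j, i < 2 * k → j < 2 * k → z i = z j → i = j)
    (hadj : ∀ i, i + 1 < 2 * k → G.Adj (z i) (z (i + 1)))
    (halt : ∀ i, i + 1 < 2 * k → (Even i ↔ s(z i, z (i + 1)) ∉ A)) :
    Relation.ReflTransGen (WormMove G)
      (A, z 0, z 0)
      (symmDiff A ((Finset.range (2 * k - 1)).image fun i => s(z i, z (i + 1))),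
        z (2 * k - 1), z 0) := by
  have hk2 : 2 ≤ 2 * k := by omega
  set E : ℕ → Sym2 V := fun i => s(z i, z (i + 1)) with hE
  have hzmem : ∀ i x, x ∈ E i ↔ (x = z i ∨ x = z (i + 1)) := by
    intro i x; simp [hE, Sym2.mem_iff]
  have hEne : ∀ i j, i + 1 < 2 * k → j + 1 < 2 * k → i ≠ j → E i ≠ E j := by
    intro i j hi hj hij h
    simp only [hE, Sym2.eq_iff] at h
    rcases h with ⟨h1, _⟩ | ⟨h1, h2⟩
    · exact hij (hinj i j (by omega) (by omega) h1)
    · have e1 := hinj i (j + 1) (by omega) (by omega) h1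
      have e2 := hinj (i + 1) j (by omega) (by omega) h2
      omega
  have hmemA : ∀ j, j + 1 < 2 * k → (E j ∈ A ↔ Odd j) := by
    intro j hj
    rw [← Nat.not_even_iff_odd, halt j hj, not_not]
  have hmemAm : ∀ m j, m ≤ j → j + 1 < 2 * k →
      (E j ∈ symmDiff A ((Finset.range m).image E) ↔ Odd j) := by
    intro m j hmj hj
    have hnot : E j ∉ (Finset.range m).image E := by
      simp only [Finset.mem_image, Finset.mem_range]
      rintro ⟨i, hi, hiE⟩
      exact hEne i j (by omega) hj (by omega) hiE
    rw [Finset.mem_symmDiff]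
    simp only [hnot, not_false_iff, and_true, false_and, or_false]
    exact hmemA j hj
  have hAm0 : symmDiff A ((Finset.range 0).image E) = A := by
    ext a; simp [Finset.mem_symmDiff]
  have hsucc : ∀ m, m + 1 < 2 * k →
      symmDiff A ((Finset.range (m + 1)).image E) =
        if Even m then insert (E m) (symmDiff A ((Finset.range m).image E))
        else (symmDiff A ((Finset.range m).image E)).erase (E m) := by
    intro m hm
    have himg : (Finset.range (m + 1)).image E = insert (E m) ((Finset.range m).image E) := by
      rw [Finset.range_add_one, Finset.image_insert]
    by_cases hev : Even m
    · rw [if_pos hev, himg, symmDiff_insert_right_of_notMem ((halt m hm).mp hev)]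
    · rw [if_neg hev, himg,
        symmDiff_insert_right_of_mem ((hmemA m hm).mpr (Nat.not_even_iff_odd.mp hev))]
  have key : ∀ m, 1 ≤ m → m < 2 * k →
      Relation.ReflTransGen (WormMove G) (A, z 0, z 0)
        (symmDiff A ((Finset.range m).image E), z m, z 0) ∧
      degA (symmDiff A ((Finset.range m).image E)) (z 0) = 3 ∧
      degA (symmDiff A ((Finset.range m).image E)) (z m) = (if Even m then 1 else 3) ∧
      (∀ i, m < i → i < 2 * k → degA (symmDiff A ((Finset.range m).image E)) (z i) = 2) := by
    intro m
    induction m with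
    | zero => omega
    | succ n ih =>
      intro _ hlt
      have hz0E : ∀ j, 1 ≤ j → j + 1 < 2 * k → z 0 ∉ E j := by
        intro j hj1 hj2 hmem
        rcases (hzmem j (z 0)).mp hmem with h | h
        · have := hinj 0 j (by omega) (by omega) h; omega
        · have := hinj 0 (j + 1) (by omega) (by omega) h; omega
      by_cases hn : n = 0
      · subst hn
        have hE0A : E 0 ∉ A := (halt 0 (by omega)).mp (by decide)
        have h1 : symmDiff A ((Finset.range 1).image E) = insert (E 0) A := by
          rw [hsucc 0 (by omega), if_pos (by decide), hAm0]
        refine ⟨?_, ?_, ?_, ?_⟩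
        · apply Relation.ReflTransGen.single
          refine Or.inl ⟨rfl, z 1, hadj 0 (by omega), hE0A, ?_, Or.inl ⟨rfl, rfl⟩⟩
          rw [h1]
        · rw [h1, degA_insert_mem hE0A ((hzmem 0 (z 0)).mpr (Or.inl rfl)), h2f]
        · rw [if_neg (by decide), h1,
            degA_insert_mem hE0A ((hzmem 0 (z 1)).mpr (Or.inr rfl)), h2f]
        · intro i hi1 hi2
          have hzi : z i ∉ E 0 := by
            intro hmem
            rcases (hzmem 0 (z i)).mp hmem with h | h
            · have := hinj i 0 (by omega) (by omega) h; omega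
            · have := hinj i 1 (by omega) (by omega) h; omega
          rw [h1, degA_insert_notMem hzi, h2f]
      · have hn1 : 1 ≤ n := by omega
        obtain ⟨reach, d0, dn, dfresh⟩ := ih hn1 (by omega)
        have hznz0 : z n ≠ z 0 := fun h => by
          have := hinj n 0 (by omega) (by omega) h; omega
        have hz0n : z 0 ∉ E n := hz0E n hn1 (by omega)
        have hzn1 : z (n + 1) ∈ E n := (hzmem n (z (n + 1))).mpr (Or.inr rfl)
        have hfreshn1 : degA (symmDiff A ((Finset.range n).image E)) (z (n + 1)) = 2 :=
          dfresh (n + 1) (by omega) (by omega)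
        have hzi_nE : ∀ i, n + 1 < i → i < 2 * k → z i ∉ E n := by
          intro i hi1 hi2 hmem
          rcases (hzmem n (z i)).mp hmem with h | h
          · have := hinj i n (by omega) (by omega) h; omega
          · have := hinj i (n + 1) (by omega) (by omega) h; omega
        by_cases hev : Even n
        · -- n even ≥ 2 : type (ii) move, add E n
          have hEnA : E n ∉ symmDiff A ((Finset.range n).image E) := by
            rw [hmemAm n n le_rfl (by omega)]
            exact Nat.not_odd_iff_even.mpr hev
          have hB : symmDiff A ((Finset.range (n + 1)).image E) =
              insert (E n) (symmDiff A ((Finset.range n).image E)) := by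
            rw [hsucc n (by omega), if_pos hev]
          have hdn1 : degA (symmDiff A ((Finset.range n).image E)) (z n) = 1 := by
            rw [dn, if_pos hev]
          refine ⟨?_, ?_, ?_, ?_⟩
          · refine reach.tail ?_
            refine Or.inr (Or.inl ⟨hznz0, hdn1, z (n + 1), hadj n (by omega), hEnA, ?_, rfl, rfl⟩)
            rw [hB]
          · rw [hB, degA_insert_notMem hz0n, d0]
          · rw [if_neg (by simp [Nat.even_add_one, hev]), hB, degA_insert_mem hEnA hzn1,
              hfreshn1]
          · intro i hi1 hi2
            rw [hB, degA_insert_notMem (hzi_nE i hi1 hi2), dfresh i (by omega) hi2]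
        · -- n odd : type (iii) move, remove E n
          have hodd : Odd n := Nat.not_even_iff_odd.mp hev
          have hEnA : E n ∈ symmDiff A ((Finset.range n).image E) :=
            (hmemAm n n le_rfl (by omega)).mpr hodd
          have hB : symmDiff A ((Finset.range (n + 1)).image E) =
              (symmDiff A ((Finset.range n).image E)).erase (E n) := by
            rw [hsucc n (by omega), if_neg hev]
          have hdn3 : degA (symmDiff A ((Finset.range n).image E)) (z n) = 3 := by
            rw [dn, if_neg hev]
          refine ⟨?_, ?_, ?_, ?_⟩
          · refine reach.tail ?_
            refine Or.inr (Or.inr (Or.inr (Or.inl ⟨hznz0, hdn3, d0, z (n + 1), hEnA, ?_, rfl, rfl⟩)))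
            rw [hB]
          · rw [hB, degA_erase_notMem hz0n, d0]
          · have := degA_erase_mem hEnA hzn1
            rw [if_pos (by simp [Nat.even_add_one, hev]), hB]
            omega
          · intro i hi1 hi2
            rw [hB, degA_erase_notMem (hzi_nE i hi1 hi2), dfresh i (by omega) hi2]
  exact (key (2 * k - 1) (by omega) (by omega)).1
end

section
/- Let G = (V,E) be a finite simple graph and let n, x > 0 be real numbers. Define π on S(G) by π(A,u,v) = d_u d_v n^{c(A)} x^{|A|}, where d_u, d_v are the degrees of u,v in G and c(A) = |A| − |V| + k(A) with k(A) the number of connected components of the spanning subgraph (V,A). Define a matrix P on S(G) whose only nonzero off-diagonal entries are, for uu' ∈ E and v ∈ V: P[(A,u,v) → (A △ uu', u', v)] = P[(A,v,u) → (A △ uu', v, u')] = (1/(2 d_u)) · m, where m = min(1, x n) if uu' ∉ A and u,u' are connected in (V,A); m = min(1, x) if uu' ∉ A and u,u' are not connected in (V,A); m = min(1, 1/(n x)) if uu' ∈ A and u,u' are connected in (V, A ∖ {uu'}); and m = min(1, 1/x) if uu' ∈ A and u,u' are not connected in (V, A ∖ {uu'}); diagonal entries are fixed so each row of P sums to 1.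 Then P is a stochastic matrix in detailed balance with π: π(s) P[s → s'] = π(s') P[s' → s] for all s, s' ∈ S(G). -/
open Finset

attribute [local instance] Classical.propDecidable

/-- The cyclomatic number `c(A) = |A| - |V| + k(A)` of the spanning subgraph `(V, A)`. -/
noncomputable def cyc {V : Type*} [Fintype V] [DecidableEq V] (A : Finset (Sym2 V)) : ℤ :=
  (A.card : ℤ) - Fintype.card V +
    Nat.card (SimpleGraph.fromEdgeSet (↑A : Set (Sym2 V))).ConnectedComponent

/-- The worm stationary weight `π(A, u, v) = d_u d_v n^{c(A)} x^{|A|}`. -/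
noncomputable def wormWeight {V : Type*} [Fintype V] [DecidableEq V]
    (G : SimpleGraph V) [DecidableRel G.Adj] (n x : ℝ)
    (p : Finset (Sym2 V) × V × V) : ℝ :=
  (G.degree p.2.1 : ℝ) * (G.degree p.2.2 : ℝ) * n ^ cyc p.1 * x ^ p.1.card

/-- The Metropolis acceptance factor for toggling the edge `ab` of the bond
configuration `A`. -/
noncomputable def mrate {V : Type*} [DecidableEq V] (n x : ℝ)
    (A : Finset (Sym2 V)) (a b : V) : ℝ :=
  if s(a, b) ∉ A then
    if (SimpleGraph.fromEdgeSet (↑A : Set (Sym2 V))).Reachable a b then min 1 (x * n)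
    else min 1 x
  else
    if (SimpleGraph.fromEdgeSet (↑(A.erase s(a, b)) : Set (Sym2 V))).Reachable a b then
      min 1 (1 / (n * x))
    else min 1 (1 / x)

/-- The off-diagonal part of the simple worm transition matrix: the defect `u` (resp. `v`)
moves to a neighbour `u'` (resp. `v'`) by toggling the traversed edge, with probability
`(1/(2 d_u)) ⋅ m`. -/
noncomputable def wormOff {V : Type*} [Fintype V] [DecidableEq V]
    (G : SimpleGraph V) [DecidableRel G.Adj] (n x : ℝ)
    (p q : Finset (Sym2 V) × V × V) : ℝ :=
  (if G.Adj p.2.1 q.2.1 ∧ q.2.2 = p.2.2 ∧ q.1 = symmDiff p.1 {s(p.2.1, q.2.1)} then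
    (1 / (2 * (G.degree p.2.1 : ℝ))) * mrate n x p.1 p.2.1 q.2.1
  else 0) +
  (if G.Adj p.2.2 q.2.2 ∧ q.2.1 = p.2.1 ∧ q.1 = symmDiff p.1 {s(p.2.2, q.2.2)} then
    (1 / (2 * (G.degree p.2.2 : ℝ))) * mrate n x p.1 p.2.2 q.2.2
  else 0)

/-- The simple worm transition matrix: off-diagonal entries are as in `wormOff`, and the
diagonal entries are fixed by normalization of the rows. -/
noncomputable def wormP {V : Type*} [Fintype V] [DecidableEq V]
    (G : SimpleGraph V) [DecidableRel G.Adj] (n x : ℝ)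
    (p q : Finset (Sym2 V) × V × V) : ℝ :=
  if q = p then 1 - ∑ r : Finset (Sym2 V) × V × V, wormOff G n x p r
  else wormOff G n x p q


/-!
Every off-diagonal move of the worm shifts one defect `u` to a neighbour `u'` and toggles the
edge `uu'`. Toggling changes `|A|` by one, and changes `c(A)` by one exactly when `u` and `u'`
are connected without that edge (otherwise the change of `|A|` is absorbed by `k(A)`). Hence
`π(s') / π(s)` is `d_{u'} / d_u` times `x n`, `x`, or the inverse of one of these; the factors
`1 / (2 d_u)` cancel the degree ratio and `min 1 r = r * min 1 r⁻¹` gives detailed balance.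
Each of the two defects leaves with total probability at most `1/2`, so the diagonal entries
are nonnegative.
-/

namespace SimpleGraph

variable {V : Type*} {H : SimpleGraph V} {a b c d : V}

theorem reachable_sup_edge_iff :
    (H ⊔ edge a b).Reachable c d ↔ H.Reachable c d ∨
      (H.Reachable c a ∧ H.Reachable b d) ∨ (H.Reachable c b ∧ H.Reachable a d) := by
  constructor
  · rintro ⟨w⟩
    induction w with
    | nil => exact .inl .rfl
    | @cons c c' d hadj _ ih =>
      rcases (sup_adj _ _ _ _).mp hadj with hH | hab
      · have hcc' := hH.reachable
        rcases ih with h | ⟨h₁, h₂⟩ | ⟨h₁, h₂⟩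
        · exact .inl (hcc'.trans h)
        · exact .inr (.inl ⟨hcc'.trans h₁, h₂⟩)
        · exact .inr (.inr ⟨hcc'.trans h₁, h₂⟩)
      · obtain ⟨⟨rfl, rfl⟩ | ⟨rfl, rfl⟩, -⟩ := (edge_adj _ _ _ _).mp hab
        · rcases ih with h | ⟨h₁, h₂⟩ | ⟨-, h₂⟩
          · exact .inr (.inl ⟨.rfl, h⟩)
          · exact .inl (h₁.symm.trans h₂)
          · exact .inl h₂
        · rcases ih with h | ⟨-, h₂⟩ | ⟨h₁, h₂⟩
          · exact .inr (.inr ⟨.rfl, h⟩)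
          · exact .inl h₂
          · exact .inl (h₁.symm.trans h₂)
  · have hle : H ≤ H ⊔ edge a b := le_sup_left
    have hab : (H ⊔ edge a b).Reachable a b := by
      rcases eq_or_ne a b with rfl | hne
      · exact .rfl
      · exact Adj.reachable (Or.inr ((edge_adj _ _ _ _).mpr ⟨.inl ⟨rfl, rfl⟩, hne⟩))
    rintro (h | ⟨h₁, h₂⟩ | ⟨h₁, h₂⟩)
    · exact h.mono hle
    · exact (h₁.mono hle).trans (hab.trans (h₂.mono hle))
    · exact (h₁.mono hle).trans (hab.symm.trans (h₂.mono hle))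

theorem reachable_sup_edge_iff_of_reachable (hab : H.Reachable a b) :
    (H ⊔ edge a b).Reachable c d ↔ H.Reachable c d := by
  rw [reachable_sup_edge_iff]
  refine ⟨?_, .inl⟩
  rintro (h | ⟨h₁, h₂⟩ | ⟨h₁, h₂⟩)
  exacts [h, h₁.trans (hab.trans h₂), h₁.trans (hab.symm.trans h₂)]

theorem card_connectedComponent_sup_edge_of_reachable (hab : H.Reachable a b) :
    Nat.card (H ⊔ edge a b).ConnectedComponent = Nat.card H.ConnectedComponent :=
  Nat.card_congr (Quot.congrRight fun _ _ => reachable_sup_edge_iff_of_reachable hab)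

theorem card_connectedComponent_sup_edge_add_one [Finite V] (hab : ¬ H.Reachable a b) :
    Nat.card (H ⊔ edge a b).ConnectedComponent + 1 = Nat.card H.ConnectedComponent := by
  classical
  let φ := ConnectedComponent.map (Hom.ofLE (le_sup_left : H ≤ H ⊔ edge a b))
  -- every component of `H ⊔ edge a b` is the image of exactly one component of `H` other than
  -- that of `b`: the components of `a` and `b` merge
  have hbij : Function.Bijective
      fun k : {k : H.ConnectedComponent // k ≠ H.connectedComponentMk b} => φ k := by
    refine ⟨fun ⟨k, hk⟩ ⟨k', hk'⟩ h => ?_, fun k => ?_⟩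
    · induction k using ConnectedComponent.ind with | _ c =>
      induction k' using ConnectedComponent.ind with | _ d =>
      rcases reachable_sup_edge_iff.mp (ConnectedComponent.exact h) with h | ⟨-, h⟩ | ⟨h, -⟩
      · exact Subtype.ext (ConnectedComponent.sound h)
      · exact absurd (ConnectedComponent.sound h.symm) hk'
      · exact absurd (ConnectedComponent.sound h) hk
    · induction k using ConnectedComponent.ind with | _ c =>
      by_cases hc : H.connectedComponentMk c = H.connectedComponentMk b
      · refine ⟨⟨H.connectedComponentMk a, fun h => hab (ConnectedComponent.exact h)⟩, ?_⟩
        exact ConnectedComponent.sound (reachable_sup_edge_iff.mpr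
          (.inr (.inl ⟨.rfl, (ConnectedComponent.exact hc).symm⟩)))
      · exact ⟨⟨_, hc⟩, rfl⟩
  rw [← Nat.card_eq_of_bijective _ hbij, ← Finite.card_option]
  exact Nat.card_congr (Equiv.optionSubtypeNe _)

end SimpleGraph

theorem Finset.symmDiff_singleton_of_notMem {α : Type*} [DecidableEq α] {s : Finset α} {a : α}
    (ha : a ∉ s) : symmDiff s {a} = insert a s := by
  ext b
  by_cases hb : b = a <;> simp [Finset.mem_symmDiff, hb, ha]

theorem Finset.symmDiff_singleton_of_mem {α : Type*} [DecidableEq α] {s : Finset α} {a : α}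
    (ha : a ∈ s) : symmDiff s {a} = s.erase a := by
  ext b
  by_cases hb : b = a <;> simp [Finset.mem_symmDiff, hb, ha]

theorem Finset.eq_symmDiff_singleton_comm {α : Type*} [DecidableEq α] {s t : Finset α} {a : α} :
    s = symmDiff t {a} ↔ t = symmDiff s {a} := by
  constructor <;> rintro rfl <;> rw [symmDiff_symmDiff_cancel_right]

theorem SimpleGraph.fromEdgeSet_insert {V : Type*} (s : Set (Sym2 V)) (a b : V) :
    fromEdgeSet (insert s(a, b) s) = fromEdgeSet s ⊔ edge a b := by
  rw [Set.insert_eq, fromEdgeSet_union, sup_comm, edge]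

theorem SimpleGraph.adj_and_eq_symmDiff_comm {V : Type*} [DecidableEq V] (G : SimpleGraph V)
    {A B : Finset (Sym2 V)} {a b : V} :
    G.Adj b a ∧ A = symmDiff B {s(b, a)} ↔ G.Adj a b ∧ B = symmDiff A {s(a, b)} := by
  rw [G.adj_comm, Sym2.eq_swap, Finset.eq_symmDiff_singleton_comm]

theorem min_one_eq_mul_min_one_one_div {α : Type*} [Field α] [LinearOrder α]
    [IsStrictOrderedRing α] {r : α} (hr : 0 < r) : min 1 r = r * min 1 (1 / r) := by
  rw [mul_min_of_nonneg _ _ hr.le, mul_one, mul_one_div_cancel hr.ne', min_comm]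

section BondWeight

open SimpleGraph

variable {V : Type*} [Fintype V] [DecidableEq V] {n x : ℝ} {A : Finset (Sym2 V)} {a b : V}

noncomputable def bondWeight (n x : ℝ) (A : Finset (Sym2 V)) : ℝ :=
  n ^ cyc A * x ^ A.card

theorem cyc_insert (he : s(a, b) ∉ A) :
    cyc (insert s(a, b) A) =
      cyc A + if (fromEdgeSet (A : Set (Sym2 V))).Reachable a b then 1 else 0 := by
  rw [cyc, cyc, Finset.coe_insert, fromEdgeSet_insert, Finset.card_insert_of_notMem he]
  split_ifs with hr
  · rw [card_connectedComponent_sup_edge_of_reachable hr]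
    push_cast
    ring
  · rw [← card_connectedComponent_sup_edge_add_one hr]
    push_cast
    ring

theorem mrate_nonneg (hn : 0 ≤ n) (hx : 0 ≤ x) : 0 ≤ mrate n x A a b := by
  unfold mrate
  split_ifs <;> positivity

theorem mrate_le_one : mrate n x A a b ≤ 1 := by
  unfold mrate
  split_ifs <;> exact min_le_left _ _

theorem mrate_insert_swap (he : s(a, b) ∉ A) :
    mrate n x (insert s(a, b) A) b a =
      if (fromEdgeSet (A : Set (Sym2 V))).Reachable a b then min 1 (1 / (n * x))
      else min 1 (1 / x) := by
  rw [mrate, show s(b, a) = s(a, b) from Sym2.eq_swap,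
    if_neg (not_not.mpr (Finset.mem_insert_self _ _)), Finset.erase_insert he]
  simp only [reachable_comm]

/-- Metropolis detailed balance for toggling the single edge `ab`: adding it multiplies the
bond weight by `x n` or `x`, according to whether it closes a cycle, which is exactly the ratio
of the two acceptance factors. -/
theorem bondWeight_mul_mrate_insert (hn : 0 < n) (hx : 0 < x) (he : s(a, b) ∉ A) :
    bondWeight n x A * mrate n x A a b =
      bondWeight n x (insert s(a, b) A) * mrate n x (insert s(a, b) A) b a := by
  rw [mrate_insert_swap he, mrate, if_pos he, bondWeight, bondWeight, cyc_insert he,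
    Finset.card_insert_of_notMem he, pow_succ]
  split_ifs
  · rw [zpow_add_one₀ hn.ne', min_one_eq_mul_min_one_one_div (mul_pos hx hn), mul_comm n x]
    ring
  · rw [add_zero, min_one_eq_mul_min_one_one_div hx]
    ring

theorem bondWeight_mul_mrate_symmDiff (hn : 0 < n) (hx : 0 < x) :
    bondWeight n x A * mrate n x A a b =
      bondWeight n x (symmDiff A {s(a, b)}) * mrate n x (symmDiff A {s(a, b)}) b a := by
  by_cases he : s(a, b) ∈ A
  · have he' : s(b, a) ∉ A.erase s(a, b) := by
      rw [Sym2.eq_swap]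
      exact Finset.notMem_erase _ _
    have := bondWeight_mul_mrate_insert hn hx he'
    rw [show s(b, a) = s(a, b) from Sym2.eq_swap, Finset.insert_erase he] at this
    rw [Finset.symmDiff_singleton_of_mem he, this]
  · rw [Finset.symmDiff_singleton_of_notMem he]
    exact bondWeight_mul_mrate_insert hn hx he

end BondWeight

section WormHop

open SimpleGraph

variable {V : Type*} [Fintype V] [DecidableEq V] (G : SimpleGraph V) [DecidableRel G.Adj]
  {n x : ℝ}

noncomputable def wormHop (n x : ℝ) (A : Finset (Sym2 V)) (a : V) (B : Finset (Sym2 V))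
    (b : V) : ℝ :=
  if G.Adj a b ∧ B = symmDiff A {s(a, b)} then 1 / (2 * (G.degree a : ℝ)) * mrate n x A a b
  else 0

theorem wormOff_eq (p q : Finset (Sym2 V) × V × V) :
    wormOff G n x p q =
      (if q.2.2 = p.2.2 then wormHop G n x p.1 p.2.1 q.1 q.2.1 else 0) +
        if q.2.1 = p.2.1 then wormHop G n x p.1 p.2.2 q.1 q.2.2 else 0 := by
  unfold wormOff wormHop
  congr 1 <;> split_ifs <;> simp_all

theorem wormOff_self (p : Finset (Sym2 V) × V × V) : wormOff G n x p p = 0 := by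
  simp [wormOff]

theorem wormWeight_eq (p : Finset (Sym2 V) × V × V) :
    wormWeight G n x p = G.degree p.2.1 * G.degree p.2.2 * bondWeight n x p.1 := by
  rw [wormWeight, bondWeight, mul_assoc _ (n ^ _)]

theorem wormHop_nonneg (hn : 0 ≤ n) (hx : 0 ≤ x) (A : Finset (Sym2 V)) (a : V)
    (B : Finset (Sym2 V)) (b : V) : 0 ≤ wormHop G n x A a B b := by
  unfold wormHop
  split_ifs
  · exact mul_nonneg (by positivity) (mrate_nonneg hn hx)
  · exact le_rfl

theorem degree_mul_bondWeight_mul_wormHop (hn : 0 < n) (hx : 0 < x) (A : Finset (Sym2 V))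
    (a : V) (B : Finset (Sym2 V)) (b : V) :
    G.degree a * bondWeight n x A * wormHop G n x A a B b =
      G.degree b * bondWeight n x B * wormHop G n x B b A a := by
  unfold wormHop
  by_cases h : G.Adj a b ∧ B = symmDiff A {s(a, b)}
  · rw [if_pos h, if_pos (G.adj_and_eq_symmDiff_comm.mpr h)]
    obtain ⟨hab, rfl⟩ := h
    have hda : (G.degree a : ℝ) ≠ 0 := by
      exact_mod_cast ((G.degree_pos_iff_exists_adj a).mpr ⟨b, hab⟩).ne'
    have hdb : (G.degree b : ℝ) ≠ 0 := by
      exact_mod_cast ((G.degree_pos_iff_exists_adj b).mpr ⟨a, hab.symm⟩).ne'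
    field_simp
    exact bondWeight_mul_mrate_symmDiff hn hx
  · rw [if_neg h, if_neg (mt G.adj_and_eq_symmDiff_comm.mp h), mul_zero, mul_zero]

theorem sum_wormHop_target (A : Finset (Sym2 V)) (a b : V) :
    ∑ B, wormHop G n x A a B b = if G.Adj a b then 1 / (2 * (G.degree a : ℝ)) * mrate n x A a b
      else 0 := by
  simp only [wormHop, ite_and]
  split_ifs <;> simp

theorem sum_wormHop_le (A : Finset (Sym2 V)) (a : V) :
    ∑ B, ∑ b, wormHop G n x A a B b ≤ 1 / 2 := by
  rw [Finset.sum_comm]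
  simp only [sum_wormHop_target]
  calc ∑ b, (if G.Adj a b then 1 / (2 * (G.degree a : ℝ)) * mrate n x A a b else 0)
      ≤ ∑ b, if G.Adj a b then 1 / (2 * (G.degree a : ℝ)) else 0 := by
        gcongr with b
        split_ifs
        · exact mul_le_of_le_one_right (by positivity) mrate_le_one
        · exact le_rfl
    _ = (G.degree a : ℝ) / G.degree a / 2 := by
        rw [Finset.sum_ite, Finset.sum_const_zero, add_zero, Finset.sum_const, nsmul_eq_mul,
          ← neighborFinset_eq_filter, card_neighborFinset_eq_degree]
        ring
    _ ≤ 1 / 2 := by gcongr; exact div_self_le_one _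

end WormHop

section WormMatrix

variable {V : Type*} [Fintype V] [DecidableEq V] (G : SimpleGraph V) [DecidableRel G.Adj]
  {n x : ℝ}

theorem wormOff_nonneg (hn : 0 ≤ n) (hx : 0 ≤ x) (p q : Finset (Sym2 V) × V × V) :
    0 ≤ wormOff G n x p q := by
  rw [wormOff_eq]
  refine add_nonneg ?_ ?_ <;> split_ifs <;> first | exact wormHop_nonneg G hn hx .. | exact le_rfl

theorem sum_wormOff_le_one (p : Finset (Sym2 V) × V × V) : ∑ q, wormOff G n x p q ≤ 1 := by
  obtain ⟨A, u, v⟩ := p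
  simp only [wormOff_eq, Finset.sum_add_distrib, Fintype.sum_prod_type, Finset.sum_ite_irrel,
    Finset.sum_const_zero, Finset.sum_ite_eq', Finset.mem_univ, if_true]
  linarith [sum_wormHop_le G (n := n) (x := x) A u, sum_wormHop_le G (n := n) (x := x) A v]

theorem sum_wormP (p : Finset (Sym2 V) × V × V) :
    ∑ q, wormP G n x p q = 1 - wormOff G n x p p := by
  have hoff : ∀ q ∈ Finset.univ.erase p, wormP G n x p q = wormOff G n x p q :=
    fun q hq => if_neg (Finset.ne_of_mem_erase hq)
  rw [← Finset.add_sum_erase _ _ (Finset.mem_univ p), Finset.sum_congr rfl hoff,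
    Finset.sum_erase_eq_sub (Finset.mem_univ p), wormP, if_pos rfl]
  ring

theorem wormWeight_mul_wormOff_comm (hn : 0 < n) (hx : 0 < x) (p q : Finset (Sym2 V) × V × V) :
    wormWeight G n x p * wormOff G n x p q = wormWeight G n x q * wormOff G n x q p := by
  obtain ⟨A, u, v⟩ := p
  obtain ⟨B, u', v'⟩ := q
  have hu := degree_mul_bondWeight_mul_wormHop G hn hx A u B u'
  have hv := degree_mul_bondWeight_mul_wormHop G hn hx A v B v'
  simp only [wormWeight_eq, wormOff_eq, eq_comm (a := u), eq_comm (a := v)]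
  split_ifs <;> subst_vars
  · linear_combination (G.degree v' : ℝ) * hu + (G.degree u' : ℝ) * hv
  · linear_combination (G.degree v' : ℝ) * hu
  · linear_combination (G.degree u' : ℝ) * hv
  · ring

end WormMatrix

theorem worm_transition_matrix_detailed_balance
    {V : Type*} [Fintype V] [DecidableEq V]
    (G : SimpleGraph V) [DecidableRel G.Adj]
    (n x : ℝ) (hn : 0 < n) (hx : 0 < x) :
    (∀ p q, 0 ≤ wormP G n x p q) ∧
    (∀ p, ∑ q, wormP G n x p q = 1) ∧
    (∀ p q : Finset (Sym2 V) × V × V,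
      SGstate G p.1 p.2.1 p.2.2 → SGstate G q.1 q.2.1 q.2.2 →
      wormWeight G n x p * wormP G n x p q = wormWeight G n x q * wormP G n x q p) := by
  refine ⟨fun p q => ?_, fun p => ?_, fun p q _ _ => ?_⟩
  · unfold wormP
    split_ifs
    · exact sub_nonneg.mpr (sum_wormOff_le_one G p)
    · exact wormOff_nonneg G hn.le hx.le p q
  · rw [sum_wormP, wormOff_self, sub_zero]
  · rcases eq_or_ne q p with rfl | hqp
    · rfl
    · rw [wormP, if_neg hqp, wormP, if_neg hqp.symm]
      exact wormWeight_mul_wormOff_comm G hn hx p q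
end
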